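/- arXiv:1805.01694 — 9 statements merged into one kernel-verified Lean document; each statement's English description precedes it below -/
import Mathlib

section
/- Let N be a nonempty proper subset of ℂ and let T be a linear operator on a complex Hilbert space H with numerical range contained in N. If λ ∉ N and the range of T − λI equals H, then T is densely defined: any η ∈ H orthogonal to D(T) is zero. -/
open scoped InnerProductSpace ComplexInnerProductSpace

/-- The numerical range of a (possibly unbounded) linear operator on a complex Hilbert space. -/
def numRange {H : Type*} [NormedAddCommGroup H] [InnerProductSpace ℂ H]
    (T : H →ₗ.[ℂ] H) : Set ℂ :=
  {z | ∃ ξ : T.domain, ‖(ξ : H)‖ = 1 ∧ ⟪(ξ : H), T ξ⟫_ℂ = z}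

theorem mem_numRange_of_inner_map_eq_mul_norm_sq {H : Type*} [NormedAddCommGroup H]
    [InnerProductSpace ℂ H] (T : H →ₗ.[ℂ] H) {ξ : T.domain} (hξ : (ξ : H) ≠ 0) {z : ℂ}
    (hz : ⟪(ξ : H), T ξ⟫_ℂ = z * (‖(ξ : H)‖ : ℂ) ^ 2) : z ∈ numRange T := by
  have hnorm : (‖(ξ : H)‖ : ℂ) ≠ 0 := by exact_mod_cast norm_ne_zero_iff.mpr hξ
  refine ⟨(‖(ξ : H)‖ : ℂ)⁻¹ • ξ, ?_, ?_⟩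
  · simp [norm_smul, hξ]
  · rw [LinearPMap.map_smul, Submodule.coe_smul, inner_smul_left, inner_smul_right, hz,
      map_inv₀, Complex.conj_ofReal]
    field_simp

theorem densely_defined_of_surjective_general {H : Type*} [NormedAddCommGroup H]
    [InnerProductSpace ℂ H] (N : Set ℂ) (T : H →ₗ.[ℂ] H) (hW : numRange T ⊆ N) (l : ℂ)
    (hl : l ∉ N)
    (hsurj : ∀ η : H, ∃ ξ : T.domain, T ξ - l • (ξ : H) = η) :
    ∀ η : H, (∀ ξ : T.domain, ⟪(ξ : H), η⟫_ℂ = 0) → η = 0 := by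
  intro η hη
  obtain ⟨ξ, rfl⟩ := hsurj η
  have hinner : ⟪(ξ : H), T ξ⟫_ℂ = l * (‖(ξ : H)‖ : ℂ) ^ 2 := by
    have := hη ξ
    rwa [inner_sub_right, inner_smul_right, inner_self_eq_norm_sq_to_K, sub_eq_zero] at this
  have hξ : ξ = 0 := by
    by_contra hne
    exact hl (hW (mem_numRange_of_inner_map_eq_mul_norm_sq T (by simpa using hne) hinner))
  simp [hξ]

/-- if `W(T) ⊆ N ≠ ℂ`, `λ ∉ N`, and `R(T - λI) = H`, then `T` is densely
defined: every `η` orthogonal to `D(T)` is zero. -/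
theorem densely_defined_of_surjective {H : Type*} [NormedAddCommGroup H]
    [InnerProductSpace ℂ H] [CompleteSpace H] (N : Set ℂ) (hNne : N.Nonempty)
    (hN : N ≠ Set.univ) (T : H →ₗ.[ℂ] H) (hW : numRange T ⊆ N) (l : ℂ) (hl : l ∉ N)
    (hsurj : ∀ η : H, ∃ ξ : T.domain, T ξ - l • (ξ : H) = η) :
    ∀ η : H, (∀ ξ : T.domain, ⟪(ξ : H), η⟫_ℂ = 0) → η = 0 :=
  densely_defined_of_surjective_general N T hW l hl hsurj
end

section
/- Let N be a nonempty proper convex subset of ℂ and T a linear operator with numerical range in N. If λ ∉ N and R(T − λI) = H, then T is N-maximal: every linear operator T' extending T with numerical range contained in N equals T. -/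
open scoped InnerProductSpace ComplexInnerProductSpace

/-! If `T' ⊇ T` had a vector `x ∈ D(T') \ D(T)`, solve `(T - λ)ξ = (T' - λ)x` with `ξ ∈ D(T)`;
then `x - ξ` is a nonzero eigenvector of `T'` for `λ`, and normalising it puts `λ` into `W(T') ⊆ N`. -/

namespace LinearPMap

theorem eq_of_le_of_surjective_sub_smul {R E : Type*} [Ring R] [AddCommGroup E] [Module R E]
    {T T' : E →ₗ.[R] E} (l : R) (hle : T ≤ T')
    (hsurj : ∀ η : E, ∃ ξ : T.domain, T ξ - l • (ξ : E) = η)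
    (hinj : ∀ ξ : T'.domain, T' ξ = l • (ξ : E) → (ξ : E) = 0) :
    T' = T := by
  suffices hdom : T'.domain ≤ T.domain from
    le_antisymm (show T' ≤ T from ⟨hdom, fun _ _ h => (hle.2 h.symm).symm⟩) hle
  intro x hx
  obtain ⟨ξ, hξ⟩ := hsurj (T' ⟨x, hx⟩ - l • x)
  let ξ' : T'.domain := ⟨ξ, hle.1 ξ.2⟩
  have hTξ : T' ξ' = T ξ := (hle.2 rfl).symm
  have hx_sub : (↑(⟨x, hx⟩ - ξ' : T'.domain) : E) = x - ξ := rfl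
  have heigen : T' (⟨x, hx⟩ - ξ') = l • (x - ξ : E) := by
    have hx_image : T' ⟨x, hx⟩ = T ξ - l • (ξ : E) + l • x := by rw [hξ]; abel
    rw [T'.map_sub, hTξ, hx_image, smul_sub]
    abel
  have hx_eq : x = ξ := sub_eq_zero.mp (hx_sub ▸ hinj _ (hx_sub ▸ heigen))
  exact hx_eq ▸ ξ.2

end LinearPMap

section NumRange

variable {H : Type*} [NormedAddCommGroup H] [InnerProductSpace ℂ H]

theorem mem_numRange_of_eigenvector {T : H →ₗ.[ℂ] H} {l : ℂ} (ξ : T.domain) (hξ : (ξ : H) ≠ 0)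
    (heigen : T ξ = l • (ξ : H)) : l ∈ numRange T := by
  have hnorm : ‖(ξ : H)‖ ≠ 0 := norm_ne_zero_iff.mpr hξ
  let c : ℂ := ((‖(ξ : H)‖⁻¹ : ℝ) : ℂ)
  refine ⟨c • ξ, ?_, ?_⟩
  · change ‖c • (ξ : H)‖ = 1
    simp [c, norm_smul, hnorm]
  · change ⟪c • (ξ : H), T (c • ξ)⟫_ℂ = l
    rw [T.map_smul, heigen, inner_smul_left, inner_smul_right, inner_smul_right,
      inner_self_eq_norm_sq_to_K, Complex.conj_ofReal]
    have hnorm_ℂ : (‖(ξ : H)‖ : ℂ) ≠ 0 := Complex.ofReal_ne_zero.mpr hnorm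
    simp only [c]
    push_cast
    field_simp
    exact mul_comm _ _

end NumRange

theorem nMaximal_of_surjective_general {H : Type*} [NormedAddCommGroup H]
    [InnerProductSpace ℂ H] (N : Set ℂ)
    (T : H →ₗ.[ℂ] H) (l : ℂ) (hl : l ∉ N)
    (hsurj : ∀ η : H, ∃ ξ : T.domain, T ξ - l • (ξ : H) = η) :
    ∀ T' : H →ₗ.[ℂ] H, T ≤ T' → numRange T' ⊆ N → T' = T := by
  intro T' hle hW'
  refine LinearPMap.eq_of_le_of_surjective_sub_smul l hle hsurj fun ξ heigen => ?_
  by_contra hξ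
  exact hl (hW' (mem_numRange_of_eigenvector ξ hξ heigen))

/-- if `N` is a nonempty proper convex subset of `ℂ`, `W(T) ⊆ N`, `λ ∉ N` and
`R(T - λI) = H`, then `T` is `N`-maximal: every extension `T'` of `T` with `W(T') ⊆ N`
equals `T`. -/
theorem nMaximal_of_surjective {H : Type*} [NormedAddCommGroup H]
    [InnerProductSpace ℂ H] [CompleteSpace H] (N : Set ℂ) (hNne : N.Nonempty)
    (hNproper : N ≠ Set.univ) (hNconv : Convex ℝ N)
    (T : H →ₗ.[ℂ] H) (hW : numRange T ⊆ N) (l : ℂ) (hl : l ∉ N)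
    (hsurj : ∀ η : H, ∃ ξ : T.domain, T ξ - l • (ξ : H) = η) :
    ∀ T' : H →ₗ.[ℂ] H, T ≤ T' → numRange T' ⊆ N → T' = T :=
  nMaximal_of_surjective_general N T l hl hsurj
end

section
/- Let T be a densely defined linear operator on a complex Hilbert space whose numerical range is contained in a horizontal strip {λ ∈ ℂ : |Im λ| ≤ α} for some α ≥ 0. Then there exist a symmetric operator S with D(S) = D(T) and a bounded self-adjoint operator B ∈ B(H) with ‖B‖ ≤ α such that T = S + iB. Moreover D(T) ⊆ D(T*), S = ½(T + T*) on D(T), and B restricted to D(T) equals (1/(2i))(T − T*). -/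
open scoped InnerProductSpace ComplexInnerProductSpace

/-!
On `D(T)` the form `b(x, y) = (2i)⁻¹ (⟪x, T y⟫ - ⟪T x, y⟫)` is Hermitian with
`b(x, x) = Im ⟪x, T x⟫`, so the strip condition gives `|b(x, x)| ≤ α ‖x‖²`, and polarization
(via the parallelogram law) upgrades this to `|b(x, y)| ≤ α ‖x‖ ‖y‖`. As
`⟪x, T y⟫ = ⟪T x, y⟫ + 2i b(x, y)`, the functional `y ↦ ⟪x, T y⟫` is then bounded, i.e.
`D(T) ⊆ D(T*)`. On `D(T)` the imaginary part `(2i)⁻¹ (T - T*)` represents `b`, so it is symmetric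
and bounded by `α`, and its continuous extension is `B`; the real part `½ (T + T*)` is `S`.
-/

namespace LinearMap.IsSymm

section Seminormed

variable {𝕜 E : Type*} [RCLike 𝕜] [SeminormedAddCommGroup E] [InnerProductSpace 𝕜 E]
  {f : E →ₗ⋆[𝕜] E →ₗ[𝕜] 𝕜} {α : ℝ}

open RCLike in
theorem re_apply_le (hf : f.IsSymm) (h : ∀ x, ‖f x x‖ ≤ α * ‖x‖ ^ 2) (x y : E) :
    re (f x y) ≤ α / 2 * (‖x‖ ^ 2 + ‖y‖ ^ 2) := by
  have polarization : f (x + y) (x + y) - f (x - y) (x - y) = 4 * (re (f x y) : 𝕜) := by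
    simp only [map_add, map_sub, LinearMap.add_apply, LinearMap.sub_apply, ← hf.eq x y]
    linear_combination 2 * add_conj (f x y)
  have hre : re (f (x + y) (x + y)) - re (f (x - y) (x - y)) = 4 * re (f x y) := by
    simpa using congrArg re polarization
  have h₁ := (re_le_norm _).trans (h (x + y))
  have h₂ := neg_le_of_abs_le ((abs_re_le_norm (f (x - y) (x - y))).trans (h (x - y)))
  have hpar := parallelogram_law_with_norm 𝕜 x y
  linear_combination (h₁ + h₂ - hre + α * hpar) / 4

open RCLike in
theorem norm_apply_le_half_add (hf : f.IsSymm) (h : ∀ x, ‖f x x‖ ≤ α * ‖x‖ ^ 2) (x y : E) :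
    ‖f x y‖ ≤ α / 2 * (‖x‖ ^ 2 + ‖y‖ ^ 2) := by
  obtain ⟨c, hc_norm, hc⟩ := exists_norm_eq_mul_self (f x y)
  have hre : re (f x (c • y)) = ‖f x y‖ := by
    rw [map_smul, smul_eq_mul, ← hc, ofReal_re]
  simpa only [hre, norm_smul, hc_norm, one_mul] using hf.re_apply_le h x (c • y)

end Seminormed

variable {𝕜 E : Type*} [RCLike 𝕜] [NormedAddCommGroup E] [InnerProductSpace 𝕜 E]
  {f : E →ₗ⋆[𝕜] E →ₗ[𝕜] 𝕜} {α : ℝ}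

theorem norm_apply_le (hf : f.IsSymm) (h : ∀ x, ‖f x x‖ ≤ α * ‖x‖ ^ 2) (x y : E) :
    ‖f x y‖ ≤ α * ‖x‖ * ‖y‖ := by
  rcases eq_or_ne x 0 with rfl | hx
  · simp
  rcases eq_or_ne y 0 with rfl | hy
  · simp
  have hx' := norm_pos_iff.mpr hx
  have hy' := norm_pos_iff.mpr hy
  have key := hf.norm_apply_le_half_add h ((‖x‖⁻¹ : 𝕜) • x) ((‖y‖⁻¹ : 𝕜) • y)
  simp only [map_smul, map_smulₛₗ, LinearMap.smul_apply, smul_eq_mul, norm_mul, norm_smul,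
    RCLike.norm_conj, norm_inv, RCLike.norm_ofReal, abs_norm] at key
  rw [inv_mul_cancel₀ hx'.ne', inv_mul_cancel₀ hy'.ne'] at key
  rw [mul_assoc, ← div_le_iff₀ (by positivity)]
  calc ‖f x y‖ / (‖x‖ * ‖y‖) = ‖y‖⁻¹ * (‖x‖⁻¹ * ‖f x y‖) := by field_simp
    _ ≤ α := by linarith

end LinearMap.IsSymm

section Dense

variable {𝕜 E F : Type*} [RCLike 𝕜] [NormedAddCommGroup E] [InnerProductSpace 𝕜 E]

variable (𝕜) in
theorem Dense.norm_le_of_forall_norm_inner_le {D : Set E} (hD : Dense D) {C : ℝ} (hC : 0 ≤ C)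
    {v : E} (h : ∀ y ∈ D, ‖⟪v, y⟫_𝕜‖ ≤ C * ‖y‖) : ‖v‖ ≤ C := by
  have hv : ‖⟪v, v⟫_𝕜‖ ≤ C * ‖v‖ :=
    hD.induction (P := fun y ↦ ‖⟪v, y⟫_𝕜‖ ≤ C * ‖y‖) h (isClosed_le (by fun_prop) (by fun_prop)) v
  rw [inner_self_eq_norm_sq_to_K, norm_pow, RCLike.norm_ofReal, abs_norm] at hv
  nlinarith [norm_nonneg v]

theorem ContinuousLinearMap.isSelfAdjoint_of_dense [CompleteSpace E] {B : E →L[𝕜] E} {D : Set E}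
    (hD : Dense D) (h : ∀ x ∈ D, ∀ y ∈ D, ⟪B x, y⟫_𝕜 = ⟪x, B y⟫_𝕜) : IsSelfAdjoint B := by
  rw [ContinuousLinearMap.isSelfAdjoint_iff_isSymmetric]
  intro x y
  induction x using hD.induction with
  | isClosed => exact isClosed_eq (by fun_prop) (by fun_prop)
  | mem x hx =>
    induction y using hD.induction with
    | isClosed => exact isClosed_eq (by fun_prop) (by fun_prop)
    | mem y hy => exact h x hx y hy

variable [NormedAddCommGroup F] [InnerProductSpace 𝕜 F] [CompleteSpace F]

theorem LinearPMap.exists_extension_of_norm_le {A : E →ₗ.[𝕜] F} (hA : Dense (A.domain : Set E))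
    {C : ℝ} (hC : 0 ≤ C) (h : ∀ x : A.domain, ‖A x‖ ≤ C * ‖x‖) :
    ∃ B : E →L[𝕜] F, ‖B‖ ≤ C ∧ ∀ x : A.domain, B x = A x := by
  let A₀ : A.domain →L[𝕜] F := A.toFun.mkContinuous C h
  refine ⟨A₀.extend A.domain.subtypeL, ?_, fun x ↦ ?_⟩
  · calc ‖A₀.extend A.domain.subtypeL‖ ≤ 1 * ‖A₀‖ :=
          A₀.opNorm_extend_le (N := 1) hA.denseRange_val fun x ↦ by simp
      _ ≤ C := by simpa using A.toFun.mkContinuous_norm_le hC h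
  · exact A₀.extend_eq hA.denseRange_val isUniformEmbedding_subtype_val.isUniformInducing x

end Dense

namespace LinearPMap

open Complex

variable {H : Type*} [NormedAddCommGroup H] [InnerProductSpace ℂ H] (T : H →ₗ.[ℂ] H)

theorem abs_im_inner_apply_le_of_numRange_subset {α : ℝ}
    (hW : numRange T ⊆ {z : ℂ | |z.im| ≤ α}) (x : T.domain) :
    |(⟪(x : H), T x⟫_ℂ).im| ≤ α * ‖x‖ ^ 2 := by
  rcases eq_or_ne x 0 with rfl | hx
  · simp
  have hx' : 0 < ‖x‖ := norm_pos_iff.mpr hx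
  have hunit : ‖((((‖x‖⁻¹ : ℝ) : ℂ) • x : T.domain) : H)‖ = 1 := by
    rw [Submodule.coe_smul, norm_smul, Complex.norm_real, norm_inv, norm_norm]
    exact inv_mul_cancel₀ hx'.ne'
  have hmem := hW ⟨_, hunit, rfl⟩
  simp only [Set.mem_ofPred_eq, map_smul, Submodule.coe_smul, inner_smul_left, inner_smul_right,
    conj_ofReal, im_ofReal_mul, abs_mul, abs_inv, abs_norm] at hmem
  rw [← mul_assoc, ← le_div_iff₀' (by positivity)] at hmem
  calc |(⟪(x : H), T x⟫_ℂ).im| ≤ α / (‖x‖⁻¹ * ‖x‖⁻¹) := hmem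
    _ = α * ‖x‖ ^ 2 := by field_simp

noncomputable def imForm : T.domain →ₗ⋆[ℂ] T.domain →ₗ[ℂ] ℂ :=
  (2 * I)⁻¹ • (((innerₛₗ ℂ).comp T.domain.subtype).compl₂ T.toFun -
    ((innerₛₗ ℂ).comp T.toFun).compl₂ T.domain.subtype)

variable {T}

theorem imForm_apply (x y : T.domain) :
    T.imForm x y = (2 * I)⁻¹ * (⟪(x : H), T y⟫_ℂ - ⟪T x, (y : H)⟫_ℂ) :=
  rfl

theorem imForm_isSymm : T.imForm.IsSymm := by
  refine ⟨fun x y ↦ ?_⟩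
  simp only [imForm_apply, map_mul, map_inv₀, map_ofNat, conj_I]
  rw [(starRingEnd ℂ).map_sub, inner_conj_symm, inner_conj_symm]
  field_simp
  ring

theorem imForm_apply_self (x : T.domain) : T.imForm x x = (⟪(x : H), T x⟫_ℂ).im := by
  rw [imForm_apply, ← inner_conj_symm (T x : H), sub_conj]
  field_simp
  push_cast
  ring

theorem domain_le_adjoint_domain_of_norm_imForm_le [CompleteSpace H] {C : ℝ}
    (h : ∀ x y : T.domain, ‖T.imForm x y‖ ≤ C * ‖x‖ * ‖y‖) : T.domain ≤ T.adjoint.domain := by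
  intro x hx
  rw [mem_adjoint_domain_iff]
  have : ⇑((innerₛₗ ℂ x).comp T.toFun) =
      fun y : T.domain ↦ ⟪T ⟨x, hx⟩, (y : H)⟫_ℂ + 2 * I * T.imForm ⟨x, hx⟩ y := by
    ext y
    change ⟪x, T y⟫_ℂ = _
    rw [imForm_apply]
    field_simp
    ring
  rw [this]
  exact (continuous_const.inner continuous_subtype_val).add (continuous_const.mul
    (AddMonoidHomClass.continuous_of_bound (T.imForm ⟨x, hx⟩) _ (h _)))

section Parts

variable [CompleteSpace H] (T : H →ₗ.[ℂ] H) (h : T.domain ≤ T.adjoint.domain)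

noncomputable def realPart : H →ₗ.[ℂ] H :=
  ⟨T.domain, (2 : ℂ)⁻¹ • (T.toFun + T.adjoint.toFun ∘ₗ Submodule.inclusion h)⟩

noncomputable def imPart : H →ₗ.[ℂ] H :=
  ⟨T.domain, (2 * I)⁻¹ • (T.toFun - T.adjoint.toFun ∘ₗ Submodule.inclusion h)⟩

variable {T h}

theorem realPart_apply (x : T.domain) :
    T.realPart h x = (2 : ℂ)⁻¹ • (T x + T.adjoint (Submodule.inclusion h x)) :=
  rfl

theorem imPart_apply (x : T.domain) :
    T.imPart h x = (2 * I)⁻¹ • (T x - T.adjoint (Submodule.inclusion h x)) :=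
  rfl

theorem realPart_add_I_smul_imPart (x : T.domain) :
    T.realPart h x + I • T.imPart h x = T x := by
  rw [realPart_apply, imPart_apply, smul_smul, show I * (2 * I)⁻¹ = 2⁻¹ by field_simp]
  module

variable (hT : Dense (T.domain : Set H))
include hT

theorem inner_adjoint_inclusion_apply_left (x y : T.domain) :
    ⟪T.adjoint (Submodule.inclusion h x), (y : H)⟫_ℂ = ⟪(x : H), T y⟫_ℂ :=
  adjoint_isFormalAdjoint hT _ y

theorem inner_adjoint_inclusion_apply_right (x y : T.domain) :
    ⟪(x : H), T.adjoint (Submodule.inclusion h y)⟫_ℂ = ⟪T x, (y : H)⟫_ℂ :=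
  ((adjoint_isFormalAdjoint hT).symm x _).symm

theorem realPart_isFormalAdjoint : (T.realPart h).IsFormalAdjoint (T.realPart h) := by
  rintro (x : T.domain) (y : T.domain)
  simp only [realPart_apply, inner_smul_left, inner_smul_right, inner_add_left, inner_add_right,
    inner_adjoint_inclusion_apply_left hT, inner_adjoint_inclusion_apply_right hT, map_inv₀,
    map_ofNat]
  ring

theorem inner_imPart_apply (x y : T.domain) : ⟪T.imPart h x, (y : H)⟫_ℂ = T.imForm x y := by
  simp only [imPart_apply, imForm_apply, inner_smul_left, inner_sub_left,
    inner_adjoint_inclusion_apply_left hT, map_inv₀, map_mul, map_ofNat, conj_I]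
  ring

theorem imPart_isFormalAdjoint : (T.imPart h).IsFormalAdjoint (T.imPart h) := by
  rintro (x : T.domain) (y : T.domain)
  rw [inner_imPart_apply hT, ← inner_conj_symm, inner_imPart_apply hT, imForm_isSymm.eq]

end Parts

end LinearPMap

/-- a densely defined operator with numerical range in the horizontal strip
`{λ : |Im λ| ≤ α}` decomposes as `T = S + iB` with `S` symmetric on `D(T)` and `B` bounded
self-adjoint with `‖B‖ ≤ α`; moreover `D(T) ⊆ D(T*)`, `S = ½(T + T*)` and
`B|_{D(T)} = (2i)⁻¹ (T - T*)`. -/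
theorem strip_decomposition {H : Type*} [NormedAddCommGroup H]
    [InnerProductSpace ℂ H] [CompleteSpace H] (α : ℝ) (hα : 0 ≤ α)
    (T : H →ₗ.[ℂ] H) (hdense : Dense (T.domain : Set H))
    (hW : numRange T ⊆ {z : ℂ | |z.im| ≤ α}) :
    ∃ (S : H →ₗ.[ℂ] H) (B : H →L[ℂ] H),
      S.domain = T.domain ∧
      (∀ ξ η : S.domain, ⟪(S ξ : H), (η : H)⟫_ℂ = ⟪(ξ : H), S η⟫_ℂ) ∧
      IsSelfAdjoint B ∧ ‖B‖ ≤ α ∧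
      (∀ x : H, ∀ (hx : x ∈ T.domain) (hxS : x ∈ S.domain),
        T ⟨x, hx⟩ = S ⟨x, hxS⟩ + Complex.I • B x) ∧
      (∀ x : H, x ∈ T.domain → x ∈ T.adjoint.domain) ∧
      (∀ x : H, ∀ (hx : x ∈ T.domain) (hxS : x ∈ S.domain) (hxA : x ∈ T.adjoint.domain),
        S ⟨x, hxS⟩ = (2 : ℂ)⁻¹ • (T ⟨x, hx⟩ + T.adjoint ⟨x, hxA⟩) ∧
        B x = (2 * Complex.I)⁻¹ • (T ⟨x, hx⟩ - T.adjoint ⟨x, hxA⟩)) := by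
  have hdiag (x : T.domain) : ‖T.imForm x x‖ ≤ α * ‖x‖ ^ 2 := by
    rw [LinearPMap.imForm_apply_self, Complex.norm_real, Real.norm_eq_abs]
    exact T.abs_im_inner_apply_le_of_numRange_subset hW x
  have hbound := LinearPMap.imForm_isSymm.norm_apply_le hdiag
  have hdom := LinearPMap.domain_le_adjoint_domain_of_norm_imForm_le hbound
  have hB₀ (x : T.domain) : ‖T.imPart hdom x‖ ≤ α * ‖x‖ :=
    hdense.norm_le_of_forall_norm_inner_le ℂ (by positivity) fun y hy ↦
      (congrArg norm (LinearPMap.inner_imPart_apply hdense x ⟨y, hy⟩)).trans_le (hbound x ⟨y, hy⟩)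
  obtain ⟨B, hB_norm, hB⟩ := (T.imPart hdom).exists_extension_of_norm_le hdense hα hB₀
  have hB_sa : IsSelfAdjoint B := B.isSelfAdjoint_of_dense hdense fun x hx y hy ↦ by
    simpa only [hB ⟨x, hx⟩, hB ⟨y, hy⟩] using
      LinearPMap.imPart_isFormalAdjoint hdense ⟨x, hx⟩ ⟨y, hy⟩
  refine ⟨T.realPart hdom, B, rfl, LinearPMap.realPart_isFormalAdjoint hdense, hB_sa, hB_norm,
    fun x hx _ ↦ ?_, hdom, fun x hx _ _ ↦ ⟨rfl, hB ⟨x, hx⟩⟩⟩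
  rw [hB ⟨x, hx⟩]
  exact (LinearPMap.realPart_add_I_smul_imPart ⟨x, hx⟩).symm
end

section
/- Let T be a densely defined operator with numerical range in the closed horizontal strip {λ : |Im λ| ≤ α}, with canonical decomposition T = S + iB (S symmetric, D(S) = D(T), B ∈ B(H) self-adjoint with ‖B‖ ≤ α). If T' is any extension of T with numerical range in the same closed strip and T' = S' + iB' is its canonical decomposition, then B' = B and S ⊆ S'. Conversely, for every symmetric extension S' of S, the operator S' + iB extends T and has numerical range in the closed strip. This gives a one-to-one correspondence between symmetric extensions of S and extensions of T with numerical range in the closed strip. -/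
open scoped InnerProductSpace ComplexInnerProductSpace

/-! Write `T = iB +ᵥ S` for the operator `x ↦ S x + i B x` on `D(S)`. For symmetric `S` one has
`Im ⟪x, (iB +ᵥ S) x⟫ = Re ⟪x, B x⟫`, so if `T ⊆ T' = iB' +ᵥ S'` the quadratic forms of the
self-adjoint operators `B` and `B'` agree on the dense set `D(T)`; by continuity and complex
polarization `B' = B`. Translation by the fixed bounded operator `iB` preserves and reflects
extension, so `T ⊆ T'` is then equivalent to `S ⊆ S'`. The strip bound for `iB +ᵥ S'` is
`|Re ⟪ξ, B ξ⟫| ≤ ‖B‖ ≤ α` for unit `ξ`. -/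

theorem Dense.eq_of_inner_map_self_eq {V : Type*} [NormedAddCommGroup V]
    [InnerProductSpace ℂ V] {s : Set V} (hs : Dense s) {A B : V →L[ℂ] V}
    (h : ∀ x ∈ s, ⟪x, A x⟫_ℂ = ⟪x, B x⟫_ℂ) : A = B := by
  have hforms : (fun x => ⟪x, A x⟫_ℂ) = fun x => ⟪x, B x⟫_ℂ :=
    (continuous_id.inner A.continuous).ext_on hs (continuous_id.inner B.continuous) h
  refine ContinuousLinearMap.coe_injective ((ext_inner_map _ _).mp fun x => ?_)
  simpa only [inner_conj_symm, ContinuousLinearMap.coe_coe] using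
    congrArg (starRingEnd ℂ) (congrFun hforms x)

namespace LinearPMap

section VAdd

variable {R E F : Type*} [Ring R] [AddCommGroup E] [Module R E] [AddCommGroup F] [Module R F]

theorem eq_vadd_of_apply_eq (f : E →ₗ[R] F) {T S : E →ₗ.[R] F} (hdom : S.domain = T.domain)
    (h : ∀ x (hx : x ∈ T.domain) (hxS : x ∈ S.domain), T ⟨x, hx⟩ = S ⟨x, hxS⟩ + f x) :
    T = f +ᵥ S := by
  refine ext hdom.symm fun x hx hxS => ?_
  rw [vadd_apply, h x hx hxS, add_comm]

theorem vadd_mono (f : E →ₗ[R] F) {S S' : E →ₗ.[R] F} (h : S ≤ S') : f +ᵥ S ≤ f +ᵥ S' :=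
  ⟨h.1, fun x y hxy => by rw [vadd_apply, vadd_apply, h.2 hxy, hxy]⟩

theorem vadd_le_vadd_iff {f : E →ₗ[R] F} {S S' : E →ₗ.[R] F} : f +ᵥ S ≤ f +ᵥ S' ↔ S ≤ S' :=
  ⟨fun h => by simpa only [neg_vadd_vadd] using vadd_mono (-f) h, vadd_mono f⟩

end VAdd

variable {H : Type*} [NormedAddCommGroup H] [InnerProductSpace ℂ H] {S : H →ₗ.[ℂ] H}

theorem IsFormalAdjoint.im_inner_self_apply (hS : S.IsFormalAdjoint S) (x : S.domain) :
    (⟪(x : H), S x⟫_ℂ).im = 0 :=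
  Complex.conj_eq_iff_im.mp (by rw [inner_conj_symm, hS])

theorem im_inner_self_I_smul_vadd_apply (hS : S.IsFormalAdjoint S) (B : H →L[ℂ] H)
    (x : S.domain) :
    (⟪(x : H), ((Complex.I • (B : H →ₗ[ℂ] H)) +ᵥ S) x⟫_ℂ).im = (⟪(x : H), B x⟫_ℂ).re := by
  rw [vadd_apply, inner_add_right, Complex.add_im, hS.im_inner_self_apply]
  simp [inner_smul_right]

theorem numRange_I_smul_vadd_subset (hS : S.IsFormalAdjoint S) (B : H →L[ℂ] H) :
    numRange ((Complex.I • (B : H →ₗ[ℂ] H)) +ᵥ S) ⊆ {z : ℂ | |z.im| ≤ ‖B‖} := by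
  rintro _ ⟨x, hx, rfl⟩
  calc |(⟪(x : H), ((Complex.I • (B : H →ₗ[ℂ] H)) +ᵥ S) x⟫_ℂ).im|
      = |(⟪(x : H), B x⟫_ℂ).re| := by rw [im_inner_self_I_smul_vadd_apply hS]
    _ ≤ ‖⟪(x : H), B x⟫_ℂ‖ := Complex.abs_re_le_norm _
    _ ≤ ‖(x : H)‖ * (‖B‖ * ‖(x : H)‖) :=
      (norm_inner_le_norm _ _).trans (by gcongr; exact B.le_opNorm _)
    _ = ‖B‖ := by rw [hx, one_mul, mul_one]

end LinearPMap

theorem strip_extension_correspondence_general {H : Type*} [NormedAddCommGroup H]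
    [InnerProductSpace ℂ H] [CompleteSpace H] (α : ℝ)
    (T S : H →ₗ.[ℂ] H) (B : H →L[ℂ] H)
    (hdense : Dense (T.domain : Set H))
    (hSdom : S.domain = T.domain)
    (hSsym : ∀ ξ η : S.domain, ⟪(S ξ : H), (η : H)⟫_ℂ = ⟪(ξ : H), S η⟫_ℂ)
    (hBsa : IsSelfAdjoint B) (hBnorm : ‖B‖ ≤ α)
    (hdec : ∀ x : H, ∀ (hx : x ∈ T.domain) (hxS : x ∈ S.domain),
      T ⟨x, hx⟩ = S ⟨x, hxS⟩ + Complex.I • B x) :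
    -- (1) the canonical decomposition of any extension of `T` with numerical range in the
    -- strip has the same bounded part `B` and symmetric part extending `S`
    (∀ (T' S' : H →ₗ.[ℂ] H) (B' : H →L[ℂ] H), T ≤ T' →
      numRange T' ⊆ {z : ℂ | |z.im| ≤ α} →
      S'.domain = T'.domain →
      (∀ ξ η : S'.domain, ⟪(S' ξ : H), (η : H)⟫_ℂ = ⟪(ξ : H), S' η⟫_ℂ) →
      IsSelfAdjoint B' → ‖B'‖ ≤ α →
      (∀ x : H, ∀ (hx : x ∈ T'.domain) (hxS : x ∈ S'.domain),
        T' ⟨x, hx⟩ = S' ⟨x, hxS⟩ + Complex.I • B' x) →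
      B' = B ∧ S ≤ S') ∧
    -- (2) conversely, for every symmetric extension `S'` of `S`, the operator `S' + iB`
    -- extends `T` and has numerical range in the closed strip
    (∀ S' : H →ₗ.[ℂ] H, S ≤ S' →
      (∀ ξ η : S'.domain, ⟪(S' ξ : H), (η : H)⟫_ℂ = ⟪(ξ : H), S' η⟫_ℂ) →
      ∃ T' : H →ₗ.[ℂ] H, T'.domain = S'.domain ∧
        (∀ x : H, ∀ (hx : x ∈ T'.domain) (hxS : x ∈ S'.domain),
          T' ⟨x, hx⟩ = S' ⟨x, hxS⟩ + Complex.I • B x) ∧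
        T ≤ T' ∧ numRange T' ⊆ {z : ℂ | |z.im| ≤ α}) := by
  obtain rfl := LinearPMap.eq_vadd_of_apply_eq (Complex.I • (B : H →ₗ[ℂ] H)) hSdom hdec
  constructor
  · rintro T' S' B' hTT' - hS'dom hS'sym hB'sa - hdec'
    obtain rfl := LinearPMap.eq_vadd_of_apply_eq (Complex.I • (B' : H →ₗ[ℂ] H)) hS'dom hdec'
    have hforms : ∀ x ∈ S.domain, (⟪x, B' x⟫_ℂ).re = (⟪x, B x⟫_ℂ).re := fun x hx => by
      rw [← LinearPMap.im_inner_self_I_smul_vadd_apply hS'sym _ ⟨x, hTT'.1 hx⟩,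
        ← LinearPMap.im_inner_self_I_smul_vadd_apply hSsym _ ⟨x, hx⟩,
        hTT'.2 (x := ⟨x, hx⟩) (y := ⟨x, hTT'.1 hx⟩) rfl]
    have hB'B : B' = B := hdense.eq_of_inner_map_self_eq fun x hx => by
      rw [← B'.coe_coe, ← B.coe_coe, ← hB'sa.isSymmetric.coe_re_inner_self_apply,
        ← hBsa.isSymmetric.coe_re_inner_self_apply]
      exact congrArg _ (hforms x hx)
    subst hB'B
    exact ⟨rfl, LinearPMap.vadd_le_vadd_iff.mp hTT'⟩
  · intro S' hSS' hS'sym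
    exact ⟨_ +ᵥ S', rfl, fun x _ _ => add_comm _ _, LinearPMap.vadd_mono _ hSS',
      (LinearPMap.numRange_I_smul_vadd_subset hS'sym B).trans fun _ hz => hz.trans hBnorm⟩

/-- one-to-one correspondence between symmetric extensions of `S` and
extensions of `T = S + iB` with numerical range in the closed strip `{λ : |Im λ| ≤ α}`. -/
theorem strip_extension_correspondence {H : Type*} [NormedAddCommGroup H]
    [InnerProductSpace ℂ H] [CompleteSpace H] (α : ℝ) (hα : 0 ≤ α)
    (T S : H →ₗ.[ℂ] H) (B : H →L[ℂ] H)
    (hdense : Dense (T.domain : Set H))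
    (hW : numRange T ⊆ {z : ℂ | |z.im| ≤ α})
    (hSdom : S.domain = T.domain)
    (hSsym : ∀ ξ η : S.domain, ⟪(S ξ : H), (η : H)⟫_ℂ = ⟪(ξ : H), S η⟫_ℂ)
    (hBsa : IsSelfAdjoint B) (hBnorm : ‖B‖ ≤ α)
    (hdec : ∀ x : H, ∀ (hx : x ∈ T.domain) (hxS : x ∈ S.domain),
      T ⟨x, hx⟩ = S ⟨x, hxS⟩ + Complex.I • B x) :
    -- (1) the canonical decomposition of any extension of `T` with numerical range in the
    -- strip has the same bounded part `B` and symmetric part extending `S`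
    (∀ (T' S' : H →ₗ.[ℂ] H) (B' : H →L[ℂ] H), T ≤ T' →
      numRange T' ⊆ {z : ℂ | |z.im| ≤ α} →
      S'.domain = T'.domain →
      (∀ ξ η : S'.domain, ⟪(S' ξ : H), (η : H)⟫_ℂ = ⟪(ξ : H), S' η⟫_ℂ) →
      IsSelfAdjoint B' → ‖B'‖ ≤ α →
      (∀ x : H, ∀ (hx : x ∈ T'.domain) (hxS : x ∈ S'.domain),
        T' ⟨x, hx⟩ = S' ⟨x, hxS⟩ + Complex.I • B' x) →
      B' = B ∧ S ≤ S') ∧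
    -- (2) conversely, for every symmetric extension `S'` of `S`, the operator `S' + iB`
    -- extends `T` and has numerical range in the closed strip
    (∀ S' : H →ₗ.[ℂ] H, S ≤ S' →
      (∀ ξ η : S'.domain, ⟪(S' ξ : H), (η : H)⟫_ℂ = ⟪(ξ : H), S' η⟫_ℂ) →
      ∃ T' : H →ₗ.[ℂ] H, T'.domain = S'.domain ∧
        (∀ x : H, ∀ (hx : x ∈ T'.domain) (hxS : x ∈ S'.domain),
          T' ⟨x, hx⟩ = S' ⟨x, hxS⟩ + Complex.I • B x) ∧
        T ≤ T' ∧ numRange T' ⊆ {z : ℂ | |z.im| ≤ α}) :=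
  strip_extension_correspondence_general α T S B hdense hSdom hSsym hBsa hBnorm hdec
end

section
/- Let α ≥ 0 and let T = S + iB be a densely defined operator on a complex Hilbert space, where S is symmetric with D(S) = D(T), B ∈ B(H) is self-adjoint with ‖B‖ ≤ α, so that the numerical range of T lies in the closed strip {λ : |Im λ| ≤ α}. If S is maximal symmetric then T is maximal among operators with numerical range in the closed strip; and conversely, if T is maximal among operators with numerical range in the closed strip, then S is maximal symmetric. -/
open scoped InnerProductSpace ComplexInnerProductSpace

/-- A (densely defined) operator is symmetric if `⟪Sξ, η⟫ = ⟪ξ, Sη⟫` on its domain. -/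
def IsSymmetricPMap {H : Type*} [NormedAddCommGroup H] [InnerProductSpace ℂ H]
    (S : H →ₗ.[ℂ] H) : Prop :=
  ∀ ξ η : S.domain, ⟪(S ξ : H), (η : H)⟫_ℂ = ⟪(ξ : H), S η⟫_ℂ


/-!
Writing `T = iB +ᵥ S`, adding `±iB` moves numerical ranges vertically by at most `‖B‖`, so
symmetric extensions `S'` of `S` give extensions `iB +ᵥ S'` of `T` inside the strip, and an
extension `T'` of `T` inside the strip gives the extension `-iB +ᵥ T'` of `S` inside a wider
strip. It remains to see that an extension `A` of a densely defined symmetric operator with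
numerical range in a strip is symmetric: the real symmetric bilinear form
`Im⟪ξ, Aη⟫ + Im⟪η, Aξ⟫` on `D(A)` is bounded on the diagonal, hence bounded and continuous, and it
vanishes on the diagonal of the dense subspace `D(S)`.
-/

namespace LinearMap

variable {V : Type*} [NormedAddCommGroup V] [NormedSpace ℝ V]

theorem abs_apply_le_of_abs_apply_self_le (f : V →ₗ[ℝ] V →ₗ[ℝ] ℝ) (hf : ∀ x y, f x y = f y x)
    {K : ℝ} (hK : ∀ x, |f x x| ≤ K * ‖x‖ ^ 2) (x y : V) : |f x y| ≤ 2 * K * ‖x‖ * ‖y‖ := by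
  have polar : ∀ u v, 4 * f u v = f (u + v) (u + v) - f (u - v) (u - v) := by
    intro u v
    simp only [map_add, map_sub, add_apply, sub_apply, hf v u]
    ring
  have unit : ∀ u v : V, ‖u‖ = 1 → ‖v‖ = 1 → |f u v| ≤ 2 * K := by
    intro u v hu hv
    have hK0 : 0 ≤ K := by simpa [hu] using (abs_nonneg _).trans (hK u)
    have h1 : ‖u + v‖ ^ 2 ≤ 4 := by nlinarith [norm_add_le u v, norm_nonneg (u + v)]
    have h2 : ‖u - v‖ ^ 2 ≤ 4 := by nlinarith [norm_sub_le u v, norm_nonneg (u - v)]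
    have := abs_sub (f (u + v) (u + v)) (f (u - v) (u - v))
    rw [← polar, abs_mul, abs_of_pos four_pos] at this
    nlinarith [hK (u + v), hK (u - v), mul_le_mul_of_nonneg_left h1 hK0,
      mul_le_mul_of_nonneg_left h2 hK0]
  rcases eq_or_ne x 0 with rfl | hx
  · simp
  rcases eq_or_ne y 0 with rfl | hy
  · simp
  have hx' : 0 < ‖x‖ := norm_pos_iff.mpr hx
  have hy' : 0 < ‖y‖ := norm_pos_iff.mpr hy
  have := unit (‖x‖⁻¹ • x) (‖y‖⁻¹ • y) (norm_smul_inv_norm hx) (norm_smul_inv_norm hy)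
  rw [map_smul, map_smul, smul_apply, smul_eq_mul, smul_eq_mul, abs_mul, abs_mul, abs_inv,
    abs_inv, abs_norm, abs_norm, inv_mul_le_iff₀ hy', inv_mul_le_iff₀ hx'] at this
  linarith

theorem apply_self_eq_zero_of_dense (f : V →ₗ[ℝ] V →ₗ[ℝ] ℝ) (hf : ∀ x y, f x y = f y x)
    {K : ℝ} (hK : ∀ x, |f x x| ≤ K * ‖x‖ ^ 2) {s : Set V} (hs : Dense s)
    (h0 : ∀ x ∈ s, f x x = 0) (x : V) : f x x = 0 := by
  let F := f.mkContinuous₂ (2 * K) fun x y ↦ abs_apply_le_of_abs_apply_self_le f hf hK x y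
  have hF : Continuous fun x ↦ F x x := F.continuous.clm_apply continuous_id
  exact congrFun (hF.ext_on hs continuous_const h0) x

end LinearMap

theorem LinearPMap.vadd_le_vadd {R E F : Type*} [Ring R] [AddCommGroup E] [Module R E]
    [AddCommGroup F] [Module R F] (f : E →ₗ[R] F) {g g' : E →ₗ.[R] F} (h : g ≤ g') :
    f +ᵥ g ≤ f +ᵥ g' :=
  ⟨h.1, fun x y hxy ↦ by rw [vadd_apply, vadd_apply, h.2 hxy, hxy]⟩

section

variable {H : Type*} [NormedAddCommGroup H] [InnerProductSpace ℂ H]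

namespace LinearPMap

noncomputable def imInner (A : H →ₗ.[ℂ] H) : A.domain →ₗ[ℝ] A.domain →ₗ[ℝ] ℝ :=
  LinearMap.mk₂ ℝ (fun ξ η ↦ (⟪(ξ : H), A η⟫_ℂ).im)
    (fun ξ₁ ξ₂ η ↦ by simp only [Submodule.coe_add, inner_add_left, Complex.add_im])
    (fun r ξ η ↦ by
      rw [← Complex.coe_smul, Submodule.coe_smul, inner_smul_left, Complex.conj_ofReal,
        Complex.im_ofReal_mul, smul_eq_mul])
    (fun ξ η₁ η₂ ↦ by simp only [map_add, inner_add_right, Complex.add_im])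
    (fun r ξ η ↦ by
      rw [← Complex.coe_smul, map_smul, inner_smul_right, Complex.im_ofReal_mul, smul_eq_mul])

@[simp]
theorem imInner_apply (A : H →ₗ.[ℂ] H) (ξ η : A.domain) :
    A.imInner ξ η = (⟪(ξ : H), A η⟫_ℂ).im := rfl

end LinearPMap

theorem numRange_subset_strip_iff {A : H →ₗ.[ℂ] H} {α : ℝ} :
    numRange A ⊆ {z : ℂ | |z.im| ≤ α} ↔
      ∀ ξ : A.domain, |(⟪(ξ : H), A ξ⟫_ℂ).im| ≤ α * ‖(ξ : H)‖ ^ 2 := by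
  refine ⟨fun h ξ ↦ ?_, ?_⟩
  · rcases eq_or_ne (ξ : H) 0 with hξ | hξ
    · simp [hξ]
    have hr : 0 < ‖(ξ : H)‖ := norm_pos_iff.mpr hξ
    set c : ℂ := ((‖(ξ : H)‖⁻¹ : ℝ) : ℂ)
    have hunit := h ⟨c • ξ, by simp [c, norm_smul, hr.ne'], rfl⟩
    rw [Set.mem_ofPred_eq, LinearPMap.map_smul, Submodule.coe_smul, inner_smul_left,
      inner_smul_right, Complex.conj_ofReal, ← mul_assoc, ← Complex.ofReal_mul,
      Complex.im_ofReal_mul, abs_mul, ← sq, abs_of_pos (by positivity), inv_pow,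
      inv_mul_le_iff₀ (by positivity), mul_comm] at hunit
    exact hunit
  · rintro h _ ⟨ξ, hξ, rfl⟩
    simpa [hξ] using h ξ

theorem IsSymmetricPMap.im_inner_self_eq_zero {S : H →ₗ.[ℂ] H} (hS : IsSymmetricPMap S)
    (ξ : S.domain) : (⟪(ξ : H), S ξ⟫_ℂ).im = 0 := by
  rw [← Complex.conj_eq_iff_im, inner_conj_symm]
  exact hS ξ ξ

theorem IsSymmetricPMap.numRange_subset_strip {S : H →ₗ.[ℂ] H} (hS : IsSymmetricPMap S) :
    numRange S ⊆ {z : ℂ | |z.im| ≤ 0} :=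
  numRange_subset_strip_iff.mpr fun ξ ↦ by simp [hS.im_inner_self_eq_zero ξ]

theorem isSymmetricPMap_of_im_inner_self_eq_zero {A : H →ₗ.[ℂ] H}
    (h : ∀ ξ : A.domain, (⟪(ξ : H), A ξ⟫_ℂ).im = 0) : IsSymmetricPMap A := by
  have him : ∀ ξ η : A.domain, (⟪(A ξ : H), (η : H)⟫_ℂ).im = (⟪(ξ : H), A η⟫_ℂ).im := by
    intro ξ η
    have := h (ξ + η)
    simp only [LinearPMap.map_add, Submodule.coe_add, inner_add_left, inner_add_right,
      Complex.add_im, h ξ, h η] at this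
    rw [← inner_conj_symm, Complex.conj_im]
    linarith
  intro ξ η
  apply Complex.ext _ (him ξ η)
  simpa [LinearPMap.map_smul, inner_smul_right] using him ξ (Complex.I • η)

theorem numRange_vadd_subset_strip {A : H →ₗ.[ℂ] H} {B : H →L[ℂ] H}
    (hB : (B : H →ₗ[ℂ] H).IsSymmetric) (c : ℂ) {β γ : ℝ}
    (hA : numRange A ⊆ {z : ℂ | |z.im| ≤ β}) (hγ : β + |c.im| * ‖B‖ ≤ γ) :
    numRange (c • (B : H →ₗ[ℂ] H) +ᵥ A) ⊆ {z : ℂ | |z.im| ≤ γ} := by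
  rintro _ ⟨ξ, hξ, rfl⟩
  have hAξ : |(⟪(ξ : H), A ⟨ξ, ξ.2⟩⟫_ℂ).im| ≤ β := hA ⟨⟨ξ, ξ.2⟩, hξ, rfl⟩
  have hBξ : |(⟪(ξ : H), B ξ⟫_ℂ).re| ≤ ‖B‖ :=
    calc |(⟪(ξ : H), B ξ⟫_ℂ).re| ≤ ‖⟪(ξ : H), B ξ⟫_ℂ‖ := Complex.abs_re_le_norm _
      _ ≤ ‖(ξ : H)‖ * ‖B ξ‖ := norm_inner_le_norm _ _
      _ ≤ ‖B‖ := by simpa [hξ] using B.le_opNorm ξ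
  have hBreal : (⟪(ξ : H), B ξ⟫_ℂ).im = 0 := by
    rw [← Complex.conj_eq_iff_im, inner_conj_symm]
    exact hB ξ ξ
  rw [Set.mem_ofPred_eq, LinearPMap.vadd_apply, inner_add_right, LinearMap.smul_apply,
    ContinuousLinearMap.coe_coe, inner_smul_right, Complex.add_im, Complex.mul_im, hBreal,
    mul_zero, zero_add]
  calc _ ≤ |c.im * (⟪(ξ : H), B ξ⟫_ℂ).re| + |(⟪(ξ : H), A ⟨ξ, ξ.2⟩⟫_ℂ).im| := abs_add_le _ _
    _ ≤ |c.im| * ‖B‖ + β := by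
      rw [abs_mul]
      gcongr
    _ ≤ γ := by linarith

theorem isSymmetricPMap_of_le_of_numRange_subset_strip {S A : H →ₗ.[ℂ] H}
    (hS : IsSymmetricPMap S) (hdense : Dense (S.domain : Set H)) (hSA : S ≤ A) {β : ℝ}
    (hA : numRange A ⊆ {z : ℂ | |z.im| ≤ β}) : IsSymmetricPMap A := by
  let f := A.imInner + A.imInner.flip
  have hf : ∀ ξ, f ξ ξ = 2 * (⟪(ξ : H), A ξ⟫_ℂ).im := fun ξ ↦ by
    simp only [f, LinearMap.add_apply, LinearMap.flip_apply, LinearPMap.imInner_apply]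
    ring
  have hbound : ∀ ξ, |f ξ ξ| ≤ 2 * β * ‖ξ‖ ^ 2 := fun ξ ↦ by
    rw [hf, abs_mul, abs_two, mul_assoc]
    exact mul_le_mul_of_nonneg_left (numRange_subset_strip_iff.mp hA ξ) zero_le_two
  have hdense' : Dense (((↑) : A.domain → H) ⁻¹' S.domain) := by
    have hsub : (S.domain : Set H) ⊆ (↑) '' (((↑) : A.domain → H) ⁻¹' S.domain) :=
      fun x hx ↦ ⟨⟨x, hSA.1 hx⟩, hx, rfl⟩
    exact Topology.IsInducing.subtypeVal.dense_iff.mpr fun ξ ↦ closure_mono hsub (hdense ξ)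
  have hzero : ∀ ξ ∈ ((↑) : A.domain → H) ⁻¹' S.domain, f ξ ξ = 0 := by
    intro ξ hξ
    rw [hf, ← hSA.2 (x := ⟨ξ, hξ⟩) rfl, hS.im_inner_self_eq_zero ⟨ξ, hξ⟩, mul_zero]
  refine isSymmetricPMap_of_im_inner_self_eq_zero fun ξ ↦ ?_
  have := LinearMap.apply_self_eq_zero_of_dense f (fun _ _ ↦ add_comm _ _) hbound hdense' hzero ξ
  rwa [hf, mul_eq_zero, or_iff_right two_ne_zero] at this

end

theorem strip_maximal_iff_symmetric_maximal_general {H : Type*} [NormedAddCommGroup H]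
    [InnerProductSpace ℂ H] [CompleteSpace H] (α : ℝ)
    (T S : H →ₗ.[ℂ] H) (B : H →L[ℂ] H)
    (hdense : Dense (T.domain : Set H))
    (hSdom : S.domain = T.domain)
    (hSsym : IsSymmetricPMap S)
    (hBsa : IsSelfAdjoint B) (hBnorm : ‖B‖ ≤ α)
    (hdec : ∀ x : H, ∀ (hx : x ∈ T.domain) (hxS : x ∈ S.domain),
      T ⟨x, hx⟩ = S ⟨x, hxS⟩ + Complex.I • B x) :
    ((numRange T ⊆ {z : ℂ | |z.im| ≤ α}) ∧
      ∀ T' : H →ₗ.[ℂ] H, T ≤ T' → numRange T' ⊆ {z : ℂ | |z.im| ≤ α} → T' = T) ↔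
    (∀ S' : H →ₗ.[ℂ] H, S ≤ S' → IsSymmetricPMap S' → S' = S) := by
  set iB : H →ₗ[ℂ] H := Complex.I • (B : H →ₗ[ℂ] H)
  have hT : T = iB +ᵥ S := LinearPMap.ext hSdom.symm fun x hxT hxS ↦ by
    rw [LinearPMap.vadd_apply, hdec x hxT hxS, add_comm]
    rfl
  subst hT
  have hB := hBsa.isSymmetric
  have hstrip : ∀ {S'}, IsSymmetricPMap S' → numRange (iB +ᵥ S') ⊆ {z : ℂ | |z.im| ≤ α} :=
    fun hS' ↦ numRange_vadd_subset_strip hB _ hS'.numRange_subset_strip (by simpa using hBnorm)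
  refine ⟨fun ⟨_, hmax⟩ S' hSS' hS' ↦ ?_, fun hmax ↦ ⟨hstrip hSsym, fun T' hTT' hT' ↦ ?_⟩⟩
  · exact AddAction.injective iB (hmax _ (LinearPMap.vadd_le_vadd iB hSS') (hstrip hS'))
  · have hST' : S ≤ -iB +ᵥ T' := neg_vadd_vadd iB S ▸ LinearPMap.vadd_le_vadd (-iB) hTT'
    have hsym : IsSymmetricPMap (-iB +ᵥ T') :=
      isSymmetricPMap_of_le_of_numRange_subset_strip hSsym hdense hST'
        (β := α + α) (by
          rw [show -iB = -Complex.I • (B : H →ₗ[ℂ] H) from (neg_smul _ _).symm]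
          exact numRange_vadd_subset_strip hB _ hT' (by simpa using hBnorm))
    rw [← hmax _ hST' hsym, vadd_neg_vadd]

/-- for `T = S + iB` (canonical decomposition, closed strip `|Im λ| ≤ α`),
`T` is maximal among operators with numerical range in the closed strip if and only if
`S` is maximal symmetric. -/
theorem strip_maximal_iff_symmetric_maximal {H : Type*} [NormedAddCommGroup H]
    [InnerProductSpace ℂ H] [CompleteSpace H] (α : ℝ) (hα : 0 ≤ α)
    (T S : H →ₗ.[ℂ] H) (B : H →L[ℂ] H)
    (hdense : Dense (T.domain : Set H))
    (hSdom : S.domain = T.domain)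
    (hSsym : IsSymmetricPMap S)
    (hBsa : IsSelfAdjoint B) (hBnorm : ‖B‖ ≤ α)
    (hdec : ∀ x : H, ∀ (hx : x ∈ T.domain) (hxS : x ∈ S.domain),
      T ⟨x, hx⟩ = S ⟨x, hxS⟩ + Complex.I • B x) :
    ((numRange T ⊆ {z : ℂ | |z.im| ≤ α}) ∧
      ∀ T' : H →ₗ.[ℂ] H, T ≤ T' → numRange T' ⊆ {z : ℂ | |z.im| ≤ α} → T' = T) ↔
    (∀ S' : H →ₗ.[ℂ] H, S ≤ S' → IsSymmetricPMap S' → S' = S) :=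
  strip_maximal_iff_symmetric_maximal_general α T S B hdense hSdom hSsym hBsa hBnorm hdec
end

section
/- Let T be a densely defined operator on a complex Hilbert space with numerical range contained in the closed horizontal strip {λ : |Im λ| ≤ α}. Then D(T) = D(T*) if and only if every λ with |Im λ| > α belongs to the resolvent set of T. -/
open scoped InnerProductSpace ComplexInnerProductSpace

/-!
The strip condition says `|Im ⟪ξ, T ξ⟫| ≤ α ‖ξ‖²` on `D(T)`. It gives the lower bound
`‖(T - λ) ξ‖ ≥ (|Im λ| - α) ‖ξ‖` and, by polarization, `|⟪ζ, T ξ⟫ - ⟪T ζ, ξ⟫| ≤ 2α ‖ζ‖ ‖ξ‖`.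
Hence `D(T) ⊆ D(T*)`, and `T - T*` on `D(T)` extends to a bounded operator `K` with `‖K‖ ≤ 2α`.

If `D(T*) = D(T)`, then `T = T* + K` is closed, so the bounded-below operator `T - λ` has closed
range; the range is also dense, since a vector orthogonal to it lies in `D(T*) = D(T)`, where the
lower bound forces it to vanish.

Conversely, if every `T - λ` with `|Im λ| > α` is onto, take `Im μ = 3α + 1`. Then
`T* - μ = (T - μ) - K` is still onto from `D(T)` by a Neumann series, while on `D(T*)` it is
injective, its kernel being orthogonal to the range of `T - conj μ`. So `D(T*) = D(T)`.
-/

open Complex Filter Topology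
open scoped LinearPMap ComplexConjugate

section

variable {E : Type*} [NormedAddCommGroup E] [InnerProductSpace ℂ E]

theorem sub_mul_norm_sq_le_norm_inner_sub_smul {α : ℝ} {x y : E}
    (h : |(⟪x, y⟫).im| ≤ α * ‖x‖ ^ 2) (l : ℂ) :
    (|l.im| - α) * ‖x‖ ^ 2 ≤ ‖⟪x, y - l • x⟫‖ := by
  have him : (⟪x, y - l • x⟫).im = (⟪x, y⟫).im - l.im * ‖x‖ ^ 2 := by
    rw [inner_sub_right, inner_smul_right, inner_self_eq_norm_sq_to_K]
    simp [← ofReal_pow]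
  calc (|l.im| - α) * ‖x‖ ^ 2 ≤ |l.im * ‖x‖ ^ 2| - |(⟪x, y⟫).im| := by
        rw [abs_mul, abs_of_nonneg (sq_nonneg ‖x‖)]; linarith
    _ ≤ |(⟪x, y⟫).im - l.im * ‖x‖ ^ 2| := abs_sub_comm (⟪x, y⟫).im _ ▸ abs_sub_abs_le_abs_sub _ _
    _ = |(⟪x, y - l • x⟫).im| := by rw [him]
    _ ≤ ‖⟪x, y - l • x⟫‖ := abs_im_le_norm _

theorem sub_mul_norm_le_norm_sub_smul {α : ℝ} {x y : E}
    (h : |(⟪x, y⟫).im| ≤ α * ‖x‖ ^ 2) (l : ℂ) : (|l.im| - α) * ‖x‖ ≤ ‖y - l • x‖ := by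
  rcases eq_or_ne x 0 with rfl | hx
  · simp
  refine le_of_mul_le_mul_left ?_ (norm_pos_iff.mpr hx)
  calc ‖x‖ * ((|l.im| - α) * ‖x‖) = (|l.im| - α) * ‖x‖ ^ 2 := by ring
    _ ≤ ‖⟪x, y - l • x⟫‖ := sub_mul_norm_sq_le_norm_inner_sub_smul h l
    _ ≤ ‖x‖ * ‖y - l • x‖ := norm_inner_le_norm _ _

theorem LinearMap.IsSymm.norm_apply_le_s11 {B : E →ₗ⋆[ℂ] E →ₗ[ℂ] ℂ} (hB : B.IsSymm) {M : ℝ}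
    (hM : ∀ x, ‖B x x‖ ≤ M * ‖x‖ ^ 2) (x y : E) : ‖B x y‖ ≤ M * ‖x‖ * ‖y‖ := by
  rcases eq_or_ne x 0 with rfl | hx
  · simp
  rcases eq_or_ne y 0 with rfl | hy
  · simp
  have hM₀ : 0 ≤ M := nonneg_of_mul_nonneg_left ((norm_nonneg _).trans (hM x)) (by positivity)
  have re_le : ∀ u v, (B u v).re ≤ M / 2 * (‖u‖ ^ 2 + ‖v‖ ^ 2) := by
    intro u v
    have polar : B (u + v) (u + v) - B (u - v) (u - v) = 4 * (B u v).re := by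
      simp only [map_add, map_sub, LinearMap.add_apply, LinearMap.sub_apply, ← hB.eq u v,
        re_eq_add_conj]
      ring
    have h₁ := (abs_le.mp ((abs_re_le_norm _).trans (hM (u + v)))).2
    have h₂ := (abs_le.mp ((abs_re_le_norm _).trans (hM (u - v)))).1
    have hpar : ‖u + v‖ ^ 2 + ‖u - v‖ ^ 2 = 2 * (‖u‖ ^ 2 + ‖v‖ ^ 2) := by
      simpa only [sq] using parallelogram_law_with_norm ℂ u v
    have := congrArg re polar
    simp only [sub_re, mul_re, ofReal_re, ofReal_im, re_ofNat, im_ofNat] at this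
    nlinarith [congrArg (M * ·) hpar]
  -- rotating `u` by the phase of `B u v` turns the bound on the real part into one on the norm
  have norm_le : ∀ u v, ‖B u v‖ ≤ M / 2 * (‖u‖ ^ 2 + ‖v‖ ^ 2) := by
    intro u v
    rcases eq_or_ne (B u v) 0 with h | h
    · rw [h, norm_zero]; positivity
    have hrot : B ((B u v / ‖B u v‖) • u) v = ‖B u v‖ := by
      rw [LinearMap.map_smulₛₗ₂, smul_eq_mul, map_div₀, conj_ofReal, div_mul_eq_mul_div,
        conj_mul', pow_two, mul_div_assoc, div_self (ofReal_ne_zero.mpr (norm_ne_zero_iff.mpr h)),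
        mul_one]
    have := re_le ((B u v / ‖B u v‖) • u) v
    rwa [hrot, ofReal_re, norm_smul, norm_div, norm_real, norm_norm,
      div_self (norm_ne_zero_iff.mpr h), one_mul] at this
  have hx' : ‖x‖ ≠ 0 := norm_ne_zero_iff.mpr hx
  have hy' : ‖y‖ ≠ 0 := norm_ne_zero_iff.mpr hy
  have := norm_le (((‖x‖⁻¹ : ℝ) : ℂ) • x) (((‖y‖⁻¹ : ℝ) : ℂ) • y)
  simp only [LinearMap.map_smulₛₗ₂, map_smul, norm_smul, smul_eq_mul, norm_mul, RCLike.norm_conj,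
    norm_real, norm_inv, norm_norm, inv_mul_cancel₀ hx', inv_mul_cancel₀ hy'] at this
  calc ‖B x y‖ = ‖x‖ * ‖y‖ * (‖y‖⁻¹ * (‖x‖⁻¹ * ‖B x y‖)) := by field_simp
    _ ≤ ‖x‖ * ‖y‖ * (M / 2 * (1 ^ 2 + 1 ^ 2)) := by gcongr
    _ = M * ‖x‖ * ‖y‖ := by ring

end

theorem norm_le_of_dense_of_norm_inner_le {𝕜 F : Type*} [RCLike 𝕜] [NormedAddCommGroup F]
    [InnerProductSpace 𝕜 F] {s : Set F} (hs : Dense s) {v : F} {M : ℝ} (hM : 0 ≤ M)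
    (h : ∀ z ∈ s, ‖⟪v, z⟫_𝕜‖ ≤ M * ‖z‖) : ‖v‖ ≤ M := by
  rw [← innerSL_apply_norm 𝕜]
  exact (innerSL 𝕜 v).opNorm_le_bound hM fun z =>
    hs.induction h (isClosed_le (by fun_prop) (by fun_prop)) z

theorem AntilipschitzWith.cauchySeq_of_comp {α β : Type*} [PseudoEMetricSpace α]
    [PseudoEMetricSpace β] {K : NNReal} {f : α → β} (hf : AntilipschitzWith K f) {u : ℕ → α}
    (hu : CauchySeq (f ∘ u)) : CauchySeq u := by
  rw [cauchySeq_iff_tendsto, ← Prod.map_comp_map] at hu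
  rw [cauchySeq_iff_tendsto]
  exact (tendsto_comap_iff.mpr hu).mono_right hf.comap_uniformity_le

theorem LinearMap.surjective_sub_of_norm_le {𝕜 E F : Type*} [NontriviallyNormedField 𝕜]
    [NormedAddCommGroup E] [NormedSpace 𝕜 E] [NormedAddCommGroup F] [NormedSpace 𝕜 F]
    [CompleteSpace F] {L B : E →ₗ[𝕜] F} (hL : Function.Surjective L) {b c : ℝ} (hb : 0 ≤ b)
    (hbc : b < c) (hLc : ∀ x, c * ‖x‖ ≤ ‖L x‖) (hB : ∀ x, ‖B x‖ ≤ b * ‖x‖) :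
    Function.Surjective (L - B) := by
  have hc : 0 < c := hb.trans_lt hbc
  have hL' : ∀ x, ‖x‖ ≤ c⁻¹ * ‖L x‖ := fun x => (le_inv_mul_iff₀ hc).mpr (hLc x)
  have hinj : Function.Injective L :=
    (AddMonoidHomClass.antilipschitz_of_bound L (K := ⟨c⁻¹, by positivity⟩) hL').injective
  let e := LinearEquiv.ofBijective L ⟨hinj, hL⟩
  have he : ∀ y, L (e.symm y) = y := e.apply_symm_apply
  -- `L - B = (1 - G) ∘ L` with `G = B ∘ L⁻¹` of norm at most `b / c < 1`
  let G : F →L[𝕜] F := (B ∘ₗ e.symm.toLinearMap).mkContinuous (b * c⁻¹) fun y =>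
    calc ‖B (e.symm y)‖ ≤ b * ‖e.symm y‖ := hB _
      _ ≤ b * (c⁻¹ * ‖y‖) := by
        gcongr
        simpa only [he] using hL' (e.symm y)
      _ = b * c⁻¹ * ‖y‖ := by ring
  have hG : ‖G‖ < 1 := (LinearMap.mkContinuous_norm_le _ (by positivity) _).trans_lt <| by
    rwa [← div_eq_mul_inv, div_lt_one hc]
  intro y
  obtain ⟨z, hz⟩ := (ContinuousLinearMap.isUnit_iff_bijective.mp (Units.oneSub G hG).isUnit).2 y
  refine ⟨e.symm z, ?_⟩
  rw [Units.val_oneSub] at hz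
  simpa [G, he] using hz

theorem LinearMap.surjective_of_isClosed_range_of_forall_inner {𝕜 E F : Type*} [RCLike 𝕜]
    [AddCommGroup E] [Module 𝕜 E] [NormedAddCommGroup F] [InnerProductSpace 𝕜 F]
    [CompleteSpace F] {L : E →ₗ[𝕜] F} (hclosed : IsClosed (Set.range L))
    (horth : ∀ v, (∀ x, ⟪v, L x⟫_𝕜 = 0) → v = 0) : Function.Surjective L := by
  have : CompleteSpace (LinearMap.range L) := by
    rw [← LinearMap.coe_range] at hclosed
    exact hclosed.completeSpace_coe
  rw [← LinearMap.range_eq_top, ← Submodule.orthogonal_eq_bot_iff, Submodule.eq_bot_iff]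
  exact fun v hv => horth v fun x =>
    (Submodule.mem_orthogonal' _ v).mp hv _ (LinearMap.mem_range_self L x)

theorem LinearPMap.IsClosed.isClosed_range_sub_smul {𝕜 E : Type*} [NontriviallyNormedField 𝕜]
    [NormedAddCommGroup E] [NormedSpace 𝕜 E] [CompleteSpace E] {f : E →ₗ.[𝕜] E}
    (hf : f.IsClosed) {l : 𝕜} {K : NNReal}
    (hK : AntilipschitzWith K fun x : f.domain => f x - l • (x : E)) :
    _root_.IsClosed (Set.range fun x : f.domain => f x - l • (x : E)) := by
  refine isClosed_of_closure_subset fun y hy => ?_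
  obtain ⟨u, hu, hlim⟩ := mem_closure_iff_seq_limit.mp hy
  choose ξ hξ using hu
  have hcauchy : CauchySeq ξ :=
    hK.cauchySeq_of_comp (by simpa only [Function.comp_def, hξ] using hlim.cauchySeq)
  obtain ⟨x, hx⟩ :=
    cauchySeq_tendsto_of_complete (uniformContinuous_subtype_val.comp_cauchySeq hcauchy)
  have hfx : Tendsto (fun n => f (ξ n)) atTop (𝓝 (y + l • x)) := by
    have : (fun n => f (ξ n)) = fun n => u n + l • (ξ n : E) := funext fun n => by
      rw [← hξ n, sub_add_cancel]
    exact this ▸ hlim.add (hx.const_smul l)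
  obtain ⟨η, hηx, hηy⟩ := f.mem_graph_iff.mp <|
    hf.mem_of_tendsto (hx.prodMk_nhds hfx) (Eventually.of_forall fun n => f.mem_graph (ξ n))
  exact ⟨η, by simp only at hηx hηy ⊢; rw [hηx, hηy, add_sub_cancel_right]⟩

namespace LinearPMap

variable {H : Type*} [NormedAddCommGroup H] [InnerProductSpace ℂ H] {T : H →ₗ.[ℂ] H} {α : ℝ}

theorem abs_im_inner_apply_le (hW : numRange T ⊆ {z : ℂ | |z.im| ≤ α}) (ξ : T.domain) :
    |(⟪(ξ : H), T ξ⟫).im| ≤ α * ‖(ξ : H)‖ ^ 2 := by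
  rcases eq_or_ne ξ 0 with rfl | hξ
  · simp
  have hξ' : 0 < ‖(ξ : H)‖ := norm_pos_iff.mpr (by simpa using hξ)
  have := hW ⟨((‖ξ‖⁻¹ : ℝ) : ℂ) • ξ, by simp [norm_smul, hξ'.ne'], rfl⟩
  simp only [Set.mem_ofPred_eq, Submodule.coe_smul, map_smul, inner_smul_left, inner_smul_right,
    conj_ofReal, ← mul_assoc, ← ofReal_mul, im_ofReal_mul, abs_mul] at this
  rw [Submodule.coe_norm, abs_inv, abs_norm] at this
  calc |(⟪(ξ : H), T ξ⟫).im|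
      = ‖(ξ : H)‖⁻¹ * ‖(ξ : H)‖⁻¹ * |(⟪(ξ : H), T ξ⟫).im| * ‖(ξ : H)‖ ^ 2 := by field_simp
    _ ≤ α * ‖(ξ : H)‖ ^ 2 := by gcongr

noncomputable def skewForm (T : H →ₗ.[ℂ] H) : T.domain →ₗ⋆[ℂ] T.domain →ₗ[ℂ] ℂ :=
  ((innerₛₗ ℂ).comp T.domain.subtype).compl₂ T.toFun -
    ((innerₛₗ ℂ).comp T.toFun).compl₂ T.domain.subtype

theorem skewForm_apply (ζ ξ : T.domain) :
    skewForm T ζ ξ = ⟪(ζ : H), T ξ⟫ - ⟪T ζ, (ξ : H)⟫ := rfl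

theorem isSymm_I_smul_skewForm : (I • skewForm T).IsSymm :=
  LinearMap.isSymm_def.mpr fun ζ ξ => by
    simp only [LinearMap.smul_apply, skewForm_apply, smul_eq_mul, map_mul, conj_I,
      _root_.map_sub, inner_conj_symm]
    ring

theorem norm_skewForm_le (hW : numRange T ⊆ {z : ℂ | |z.im| ≤ α}) (ζ ξ : T.domain) :
    ‖skewForm T ζ ξ‖ ≤ 2 * α * ‖ζ‖ * ‖ξ‖ := by
  have hdiag (ξ : T.domain) : ‖(I • skewForm T) ξ ξ‖ ≤ 2 * α * ‖ξ‖ ^ 2 := by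
    rw [LinearMap.smul_apply, LinearMap.smul_apply, norm_smul, norm_I, one_mul, skewForm_apply,
      ← inner_conj_symm (T ξ : H), sub_conj, norm_mul, norm_I, mul_one, norm_real,
      Real.norm_eq_abs, abs_mul, abs_two, Submodule.coe_norm]
    linarith [abs_im_inner_apply_le hW ξ]
  simpa [norm_smul] using isSymm_I_smul_skewForm.norm_apply_le_s11 hdiag ζ ξ

variable [CompleteSpace H]

theorem domain_le_adjoint_domain (hW : numRange T ⊆ {z : ℂ | |z.im| ≤ α}) :
    T.domain ≤ T†.domain := fun x hx => by
  rw [mem_adjoint_domain_iff]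
  set ξ : T.domain := ⟨x, hx⟩
  refine AddMonoidHomClass.continuous_of_bound _ (‖T ξ‖ + 2 * α * ‖ξ‖) fun ζ => ?_
  calc ‖⟪x, T ζ⟫‖ = ‖⟪T ξ, (ζ : H)⟫ + skewForm T ξ ζ‖ := by rw [skewForm_apply, add_sub_cancel]
    _ ≤ ‖T ξ‖ * ‖ζ‖ + 2 * α * ‖ξ‖ * ‖ζ‖ :=
      norm_add_le_of_le (norm_inner_le_norm _ _) (norm_skewForm_le hW ξ ζ)
    _ = (‖T ξ‖ + 2 * α * ‖ξ‖) * ‖ζ‖ := by ring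

theorem eq_zero_of_forall_inner_sub_smul_eq_zero (hW : numRange T ⊆ {z : ℂ | |z.im| ≤ α})
    (hD : T†.domain = T.domain) {l : ℂ} (hl : α < |l.im|) {v : H}
    (hv : ∀ ξ : T.domain, ⟪v, T ξ - l • (ξ : H)⟫ = 0) : v = 0 := by
  have hv' : v ∈ T†.domain := mem_adjoint_domain_of_exists v ⟨conj l • v, fun ξ => by
    have := hv ξ
    rw [inner_sub_right, inner_smul_right, sub_eq_zero] at this
    rw [inner_smul_left, conj_conj, this]⟩
  have := sub_mul_norm_sq_le_norm_inner_sub_smul (abs_im_inner_apply_le hW ⟨v, hD.le hv'⟩) l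
  rw [hv ⟨v, hD.le hv'⟩, norm_zero] at this
  have hsq : ‖v‖ ^ 2 ≤ 0 := by nlinarith [sub_pos.mpr hl]
  simpa using hsq

variable (hdense : Dense (T.domain : Set H))
include hdense

theorem inner_sub_adjoint_apply {ξ : T.domain} {η : T†.domain} (hη : (η : H) = ξ)
    (ζ : T.domain) : ⟪(ζ : H), T ξ - T† η⟫ = skewForm T ζ ξ := by
  rw [inner_sub_right, skewForm_apply, ← inner_conj_symm (ζ : H) (T† η),
    adjoint_isFormalAdjoint hdense η ζ, hη, inner_conj_symm]

theorem norm_sub_adjoint_apply_le (hα : 0 ≤ α) (hW : numRange T ⊆ {z : ℂ | |z.im| ≤ α})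
    {ξ : T.domain} {η : T†.domain} (hη : (η : H) = ξ) : ‖T ξ - T† η‖ ≤ 2 * α * ‖ξ‖ := by
  refine norm_le_of_dense_of_norm_inner_le (𝕜 := ℂ) hdense (by positivity) fun z hz => ?_
  rw [← norm_inner_symm, inner_sub_adjoint_apply hdense hη ⟨z, hz⟩]
  simpa [mul_right_comm] using norm_skewForm_le hW ⟨z, hz⟩ ξ

theorem exists_clm_eq_sub_adjoint (hα : 0 ≤ α) (hW : numRange T ⊆ {z : ℂ | |z.im| ≤ α}) :
    ∃ K : H →L[ℂ] H, (∀ x, ‖K x‖ ≤ 2 * α * ‖x‖) ∧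
      ∀ (ξ : T.domain) (η : T†.domain), (η : H) = ξ → K ξ = T ξ - T† η := by
  let f : T.domain →ₗ[ℂ] H :=
    T.toFun - T†.toFun ∘ₗ Submodule.inclusion (domain_le_adjoint_domain hW)
  have hf (ξ : T.domain) : ‖f ξ‖ ≤ 2 * α * ‖T.domain.subtype ξ‖ :=
    norm_sub_adjoint_apply_le hdense hα hW rfl
  have hdense' : DenseRange T.domain.subtype := hdense.denseRange_val
  refine ⟨f.extendOfNorm T.domain.subtype, LinearMap.norm_extendOfNorm_apply_le hdense' _ hf,
    fun ξ η hη => ?_⟩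
  obtain rfl : Submodule.inclusion (domain_le_adjoint_domain hW) ξ = η := Subtype.ext hη.symm
  exact LinearMap.extendOfNorm_eq hdense' ⟨_, hf⟩ ξ

theorem isClosed_of_adjoint_domain_eq (hα : 0 ≤ α) (hW : numRange T ⊆ {z : ℂ | |z.im| ≤ α})
    (hD : T†.domain = T.domain) : T.IsClosed := by
  obtain ⟨K, -, hK⟩ := exists_clm_eq_sub_adjoint hdense hα hW
  -- `T = T† + K` on the common domain: the graph of `T` is a continuous preimage of that of `T†`
  have hgraph : (T.graph : Set (H × H)) = (fun p => (p.1, p.2 - K p.1)) ⁻¹' T†.graph := by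
    ext ⟨x, y⟩
    simp only [Set.mem_preimage, SetLike.mem_coe, mem_graph_iff]
    constructor
    · rintro ⟨ξ, rfl, rfl⟩
      exact ⟨⟨ξ, hD.ge ξ.2⟩, rfl, by rw [hK ξ ⟨ξ, hD.ge ξ.2⟩ rfl, sub_sub_cancel]⟩
    · rintro ⟨η, rfl, hη⟩
      refine ⟨⟨η, hD.le η.2⟩, rfl, ?_⟩
      rw [hK ⟨η, hD.le η.2⟩ η rfl] at hη
      linear_combination (norm := module) hη
  rw [LinearPMap.IsClosed, hgraph]
  exact (adjoint_isClosed hdense).preimage (by fun_prop)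

theorem resolvent_of_adjoint_domain_eq (hα : 0 ≤ α) (hW : numRange T ⊆ {z : ℂ | |z.im| ≤ α})
    (hD : T†.domain = T.domain) {l : ℂ} (hl : α < |l.im|) :
    Function.Bijective (fun ξ : T.domain => T ξ - l • (ξ : H)) ∧
      ∃ C : ℝ, 0 ≤ C ∧ ∀ ξ : T.domain, ‖(ξ : H)‖ ≤ C * ‖T ξ - l • (ξ : H)‖ := by
  have hc : 0 < |l.im| - α := sub_pos.mpr hl
  have hbound (ξ : T.domain) : ‖(ξ : H)‖ ≤ (|l.im| - α)⁻¹ * ‖T ξ - l • (ξ : H)‖ :=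
    (le_inv_mul_iff₀ hc).mpr (sub_mul_norm_le_norm_sub_smul (abs_im_inner_apply_le hW ξ) l)
  have hanti : AntilipschitzWith ⟨(|l.im| - α)⁻¹, by positivity⟩
      (fun ξ : T.domain => T ξ - l • (ξ : H)) :=
    AddMonoidHomClass.antilipschitz_of_bound (T.toFun - l • T.domain.subtype) hbound
  refine ⟨⟨hanti.injective, ?_⟩, _, by positivity, hbound⟩
  exact LinearMap.surjective_of_isClosed_range_of_forall_inner
    (L := T.toFun - l • T.domain.subtype)
    ((isClosed_of_adjoint_domain_eq hdense hα hW hD).isClosed_range_sub_smul hanti)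
    fun v hv => eq_zero_of_forall_inner_sub_smul_eq_zero hW hD hl hv

theorem eq_zero_of_adjoint_apply_eq_smul {μ : ℂ}
    (hsurj : Function.Surjective fun ξ : T.domain => T ξ - conj μ • (ξ : H)) (η : T†.domain)
    (hη : T† η = μ • (η : H)) : (η : H) = 0 := by
  obtain ⟨ζ, hζ⟩ := hsurj η
  rw [← inner_self_eq_zero (𝕜 := ℂ)]
  nth_rw 2 [← hζ]
  rw [inner_sub_right, inner_smul_right, ← adjoint_isFormalAdjoint hdense η ζ, hη,
    inner_smul_left, sub_self]

theorem adjoint_domain_eq_of_surjective (hα : 0 ≤ α) (hW : numRange T ⊆ {z : ℂ | |z.im| ≤ α})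
    (hsurj : ∀ l : ℂ, α < |l.im| → Function.Surjective fun ξ : T.domain => T ξ - l • (ξ : H)) :
    T†.domain = T.domain := by
  obtain ⟨K, hKb, hK⟩ := exists_clm_eq_sub_adjoint hdense hα hW
  refine le_antisymm (fun x hx => ?_) (domain_le_adjoint_domain hW)
  -- `|Im μ| > 3α` makes the bound `2α` of `K` smaller than the lower bound `|Im μ| - α` of `T - μ`
  set μ : ℂ := (3 * α + 1 : ℝ) * I
  have hμim : |μ.im| = 3 * α + 1 := by simp [μ, abs_of_pos (by linarith : 0 < 3 * α + 1)]
  have hμ : α < |μ.im| := by linarith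
  have hμ' : α < |(conj μ).im| := by rwa [conj_im, abs_neg]
  obtain ⟨ξ, hξ⟩ := LinearMap.surjective_sub_of_norm_le (L := T.toFun - μ • T.domain.subtype)
    (B := K.toLinearMap ∘ₗ T.domain.subtype) (hsurj μ hμ) (by positivity)
    (by linarith : 2 * α < |μ.im| - α)
    (fun ξ => sub_mul_norm_le_norm_sub_smul (abs_im_inner_apply_le hW ξ) μ) (fun ξ => hKb ξ)
    (T† ⟨x, hx⟩ - μ • x)
  set ξ' : T†.domain := Submodule.inclusion (domain_le_adjoint_domain hW) ξ
  have hx_eq : ((⟨x, hx⟩ - ξ' : T†.domain) : H) = 0 := by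
    refine eq_zero_of_adjoint_apply_eq_smul hdense (hsurj _ hμ') _ ?_
    simp only [LinearMap.sub_apply, LinearMap.smul_apply, LinearMap.comp_apply,
      Submodule.subtype_apply, ContinuousLinearMap.coe_coe, hK ξ ξ' rfl, toFun_eq_coe] at hξ
    rw [LinearPMap.map_sub, Submodule.coe_sub, Submodule.coe_inclusion]
    linear_combination (norm := module) -hξ
  rw [Submodule.coe_sub, sub_eq_zero] at hx_eq
  exact (show x = ξ from hx_eq) ▸ ξ.2

end LinearPMap

/-- for a densely defined `T` with numerical range in the closed strip
`{λ : |Im λ| ≤ α}`, one has `D(T) = D(T*)` if and only if every `λ` with `|Im λ| > α`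
belongs to the resolvent set of `T` (i.e. `T - λ` is bijective with bounded inverse). -/
theorem domain_eq_adjoint_domain_iff_resolvent {H : Type*} [NormedAddCommGroup H]
    [InnerProductSpace ℂ H] [CompleteSpace H] (α : ℝ) (hα : 0 ≤ α)
    (T : H →ₗ.[ℂ] H) (hdense : Dense (T.domain : Set H))
    (hW : numRange T ⊆ {z : ℂ | |z.im| ≤ α}) :
    T.adjoint.domain = T.domain ↔
      ∀ l : ℂ, α < |l.im| →
        Function.Bijective (fun ξ : T.domain => T ξ - l • (ξ : H)) ∧
        ∃ C : ℝ, 0 ≤ C ∧ ∀ ξ : T.domain, ‖(ξ : H)‖ ≤ C * ‖T ξ - l • (ξ : H)‖ :=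
  ⟨fun hD _ hl => T.resolvent_of_adjoint_domain_eq hdense hα hW hD hl,
    fun hres => T.adjoint_domain_eq_of_surjective hdense hα hW fun l hl => (hres l hl).1.2⟩
end

section
/- Let K ∈ B(H) and θ ∈ (0, π/2). Then ‖sin(θ) Kη ± i cos(θ) η‖ ≤ ‖η‖ for all η ∈ H (both signs) if and only if ⟨(I + K)η, (I − K)η⟩ lies in the sector {λ ∈ ℂ : |arg λ| ≤ θ} ∪ {0} for all η ∈ H, i.e., |Im⟨(I+K)η,(I−K)η⟩| ≤ tan(θ) · Re⟨(I+K)η,(I−K)η⟩ for all η ∈ H. -/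
open scoped InnerProductSpace ComplexInnerProductSpace

/-!
Both sides are pointwise conditions on `η`. Expanding the square,
`‖sin θ • Kη ± (i cos θ) • η‖² ≤ ‖η‖²` reads `±2 sin θ cos θ Im⟪η, Kη⟫ ≤ sin² θ (‖η‖² - ‖Kη‖²)`,
i.e. `±2 Im⟪η, Kη⟫ ≤ tan θ (‖η‖² - ‖Kη‖²)` since `sin θ, cos θ > 0`; and these are the real and
imaginary parts of `⟪η - Kη, η + Kη⟫`, so the two signs together say `|Im| ≤ tan θ · Re`.
-/

section InnerProduct

variable {E : Type*} [NormedAddCommGroup E] [InnerProductSpace ℂ E]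

theorem re_inner_sub_add (x y : E) : (⟪x - y, x + y⟫_ℂ).re = ‖x‖ ^ 2 - ‖y‖ ^ 2 := by
  have hyx : (⟪y, x⟫_ℂ).re = (⟪x, y⟫_ℂ).re := inner_re_symm (𝕜 := ℂ) y x
  rw [inner_sub_left, inner_add_right, inner_add_right, inner_self_eq_norm_sq_to_K,
    inner_self_eq_norm_sq_to_K]
  simp only [Complex.coe_algebraMap, ← Complex.ofReal_pow, Complex.sub_re, Complex.add_re,
    Complex.ofReal_re, hyx]
  ring

theorem im_inner_sub_add (x y : E) : (⟪x - y, x + y⟫_ℂ).im = 2 * (⟪x, y⟫_ℂ).im := by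
  have hyx : (⟪y, x⟫_ℂ).im = -(⟪x, y⟫_ℂ).im := inner_im_symm (𝕜 := ℂ) y x
  rw [inner_sub_left, inner_add_right, inner_add_right, inner_self_eq_norm_sq_to_K,
    inner_self_eq_norm_sq_to_K]
  simp only [Complex.coe_algebraMap, ← Complex.ofReal_pow, Complex.sub_im, Complex.add_im,
    Complex.ofReal_im, hyx]
  ring

theorem norm_sq_ofReal_smul_add_I_mul_smul (s c : ℝ) (x y : E) :
    ‖(s : ℂ) • y + (Complex.I * c) • x‖ ^ 2
      = s ^ 2 * ‖y‖ ^ 2 + c ^ 2 * ‖x‖ ^ 2 + s * c * (2 * (⟪x, y⟫_ℂ).im) := by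
  have hyx : (⟪y, x⟫_ℂ).im = -(⟪x, y⟫_ℂ).im := inner_im_symm (𝕜 := ℂ) y x
  rw [@norm_add_sq ℂ, inner_smul_left, inner_smul_right, norm_smul, norm_smul]
  simp only [Complex.norm_real, Real.norm_eq_abs, mul_pow, sq_abs, Complex.conj_ofReal,
    RCLike.mul_re, RCLike.re_to_complex, RCLike.im_to_complex, Complex.ofReal_re, Complex.ofReal_im,
    Complex.I_re, Complex.I_im, RCLike.mul_im, hyx, Complex.norm_mul, Complex.norm_I]
  ring

theorem norm_sq_ofReal_smul_sub_I_mul_smul (s c : ℝ) (x y : E) :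
    ‖(s : ℂ) • y - (Complex.I * c) • x‖ ^ 2
      = s ^ 2 * ‖y‖ ^ 2 + c ^ 2 * ‖x‖ ^ 2 + s * c * -(2 * (⟪x, y⟫_ℂ).im) := by
  have hneg := norm_sq_ofReal_smul_add_I_mul_smul s (-c) x y
  rw [Complex.ofReal_neg, mul_neg, neg_smul, ← sub_eq_add_neg] at hneg
  rw [hneg]
  ring

end InnerProduct

theorem sin_sq_mul_add_cos_sq_mul_add_le_iff {θ X Y t : ℝ} (hθ₀ : 0 < θ) (hθ₁ : θ < Real.pi / 2) :
    Real.sin θ ^ 2 * Y + Real.cos θ ^ 2 * X + Real.sin θ * Real.cos θ * t ≤ X ↔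
      t ≤ Real.tan θ * (X - Y) := by
  have hs : 0 < Real.sin θ := Real.sin_pos_of_pos_of_lt_pi hθ₀ (by linarith [Real.pi_pos])
  have hc : 0 < Real.cos θ := Real.cos_pos_of_mem_Ioo ⟨by linarith [Real.pi_pos], hθ₁⟩
  have hgap : X - (Real.sin θ ^ 2 * Y + Real.cos θ ^ 2 * X + Real.sin θ * Real.cos θ * t)
      = Real.sin θ * (Real.sin θ * (X - Y) - t * Real.cos θ) := by
    linear_combination -X * Real.sin_sq_add_cos_sq θ
  rw [Real.tan_eq_sin_div_cos, div_mul_eq_mul_div, le_div_iff₀ hc, ← sub_nonneg, hgap,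
    mul_nonneg_iff_of_pos_left hs, sub_nonneg]

theorem sector_condition_iff_general {H : Type*} [NormedAddCommGroup H]
    [InnerProductSpace ℂ H]
    (K : H →L[ℂ] H) (θ : ℝ) (hθ₀ : 0 < θ) (hθ₁ : θ < Real.pi / 2) :
    ((∀ η : H, ‖(Real.sin θ : ℂ) • K η + (Complex.I * Real.cos θ) • η‖ ≤ ‖η‖) ∧
     (∀ η : H, ‖(Real.sin θ : ℂ) • K η - (Complex.I * Real.cos θ) • η‖ ≤ ‖η‖)) ↔
    (∀ η : H, |(⟪η - K η, η + K η⟫_ℂ).im| ≤ Real.tan θ * (⟪η - K η, η + K η⟫_ℂ).re) := by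
  rw [← forall_and]
  refine forall_congr' fun η => ?_
  rw [← sq_le_sq₀ (norm_nonneg _) (norm_nonneg _), ← sq_le_sq₀ (norm_nonneg _) (norm_nonneg _),
    norm_sq_ofReal_smul_add_I_mul_smul, norm_sq_ofReal_smul_sub_I_mul_smul,
    sin_sq_mul_add_cos_sq_mul_add_le_iff hθ₀ hθ₁, sin_sq_mul_add_cos_sq_mul_add_le_iff hθ₀ hθ₁,
    re_inner_sub_add, im_inner_sub_add, abs_le']

/-- for `K ∈ B(H)` and `θ ∈ (0, π/2)`,
`‖sin θ · Kη ± i cos θ · η‖ ≤ ‖η‖` for all `η` (both signs) if and only if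
`|Im ⟨(I + K)η, (I - K)η⟩| ≤ tan θ · Re ⟨(I + K)η, (I - K)η⟩` for all `η`. -/
theorem sector_condition_iff {H : Type*} [NormedAddCommGroup H]
    [InnerProductSpace ℂ H] [CompleteSpace H]
    (K : H →L[ℂ] H) (θ : ℝ) (hθ₀ : 0 < θ) (hθ₁ : θ < Real.pi / 2) :
    ((∀ η : H, ‖(Real.sin θ : ℂ) • K η + (Complex.I * Real.cos θ) • η‖ ≤ ‖η‖) ∧
     (∀ η : H, ‖(Real.sin θ : ℂ) • K η - (Complex.I * Real.cos θ) • η‖ ≤ ‖η‖)) ↔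
    (∀ η : H, |(⟪η - K η, η + K η⟫_ℂ).im| ≤ Real.tan θ * (⟪η - K η, η + K η⟫_ℂ).re) :=
  sector_condition_iff_general K θ hθ₀ hθ₁
end

section
/- Let T be the operator on ℂ² with domain D(T) = {(x, 0) : x ∈ ℂ} defined by T(x, 0) = (0, x). Then T has numerical range {0} ⊆ [0, ∞), T is closed, not densely defined, R(T − λI) ≠ ℂ² for every λ ∉ [0, ∞), and T is maximal positive: T has no proper extension with numerical range contained in [0, ∞). -/
/-!
The numerical range of `T` is `{0}` because `T` maps its domain `ℂ e₀` onto the orthogonal line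
`ℂ e₁`. For maximality, a positive extension `T'` has a nonnegative quadratic form `q` on its
domain, and polarization makes `q` Hermitian. An isotropic vector `u` of a nonnegative Hermitian
form satisfies `⟪v, T' u⟫ = 0` for all `v` in the domain (otherwise `q (v - t β̄ u)`, with
`β = ⟪v, T' u⟫`, becomes negative for large `t`). Applied to `u = e₀`, where `T' e₀ = e₁`, this
forces the domain of `T'` into `e₁ᗮ = D(T)`.
-/

open scoped InnerProductSpace ComplexInnerProductSpace

open scoped ComplexOrder ComplexConjugate

section Positive

variable {H : Type*} [NormedAddCommGroup H] [InnerProductSpace ℂ H] {T : H →ₗ.[ℂ] H}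

lemma inner_apply_self_nonneg_of_numRange_subset
    (hT : numRange T ⊆ {z : ℂ | z.im = 0 ∧ 0 ≤ z.re}) (ξ : T.domain) :
    0 ≤ ⟪(ξ : H), T ξ⟫_ℂ := by
  obtain hξ | hξ := eq_or_ne (ξ : H) 0
  · simp [hξ]
  set r : ℂ := (‖(ξ : H)‖ : ℂ) with hr
  have hunit : ‖((r⁻¹ • ξ : T.domain) : H)‖ = 1 := by
    simp [r, norm_smul, hξ]
  have hscale : ⟪(ξ : H), T ξ⟫_ℂ =
      ((‖(ξ : H)‖ ^ 2 : ℝ) : ℂ) * ⟪((r⁻¹ • ξ : T.domain) : H), T (r⁻¹ • ξ)⟫_ℂ := by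
    simp only [LinearPMap.map_smul, Submodule.coe_smul, inner_smul_left, inner_smul_right, map_inv₀,
      hr, Complex.conj_ofReal]
    push_cast
    field_simp
  have hnonneg := hT ⟨_, hunit, rfl⟩
  rw [hscale]
  exact mul_nonneg (Complex.zero_le_real.2 (by positivity))
    (Complex.nonneg_iff.2 ⟨hnonneg.2, hnonneg.1.symm⟩)

lemma inner_apply_add_smul (ξ η : T.domain) (s : ℂ) :
    ⟪((ξ + s • η : T.domain) : H), T (ξ + s • η)⟫_ℂ =
      ⟪(ξ : H), T ξ⟫_ℂ + s * ⟪(ξ : H), T η⟫_ℂ + conj s * ⟪(η : H), T ξ⟫_ℂ +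
        conj s * s * ⟪(η : H), T η⟫_ℂ := by
  simp only [LinearPMap.map_add, LinearPMap.map_smul, Submodule.coe_add, Submodule.coe_smul,
    inner_add_left, inner_add_right, inner_smul_left, inner_smul_right]
  ring

lemma inner_apply_eq_conj_of_nonneg (hT : ∀ ξ : T.domain, 0 ≤ ⟪(ξ : H), T ξ⟫_ℂ)
    (ξ η : T.domain) : ⟪(η : H), T ξ⟫_ℂ = conj ⟪(ξ : H), T η⟫_ℂ := by
  have him (ζ : T.domain) : (⟪(ζ : H), T ζ⟫_ℂ).im = 0 := (Complex.nonneg_iff.1 (hT ζ)).2.symm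
  set α := ⟪(ξ : H), T η⟫_ℂ
  set β := ⟪(η : H), T ξ⟫_ℂ
  have h1 : α.im + β.im = 0 := by
    have h := him (ξ + (1 : ℂ) • η)
    rw [inner_apply_add_smul] at h
    simpa [him ξ, him η] using h
  have hI : α.re - β.re = 0 := by
    have h := him (ξ + Complex.I • η)
    rw [inner_apply_add_smul] at h
    simpa [him ξ, him η, sub_eq_add_neg] using h
  apply Complex.ext <;> simp only [Complex.conj_re, Complex.conj_im] <;> linarith

lemma inner_apply_eq_zero_of_inner_apply_self_eq_zero
    (hT : ∀ ξ : T.domain, 0 ≤ ⟪(ξ : H), T ξ⟫_ℂ) {u : T.domain} (hu : ⟪(u : H), T u⟫_ℂ = 0)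
    (v : T.domain) : ⟪(v : H), T u⟫_ℂ = 0 := by
  set β := ⟪(v : H), T u⟫_ℂ
  set q := ⟪(v : H), T v⟫_ℂ
  by_contra hβ
  have hn : 0 < Complex.normSq β := Complex.normSq_pos.2 hβ
  set t : ℝ := (q.re + 1) / (2 * Complex.normSq β)
  set w : T.domain := v + (-(t : ℂ) * conj β) • u
  have hform : ⟪(w : H), T w⟫_ℂ = q - ((2 * t * Complex.normSq β : ℝ) : ℂ) := by
    rw [inner_apply_add_smul, hu, inner_apply_eq_conj_of_nonneg hT v u]
    simp only [map_mul, map_neg, Complex.conj_ofReal, Complex.conj_conj, mul_zero, add_zero]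
    push_cast
    linear_combination (2 * (t : ℂ)) * Complex.normSq_eq_conj_mul_self (z := β)
  have h := (Complex.nonneg_iff.1 (hT w)).1
  rw [hform, Complex.sub_re, Complex.ofReal_re,
    show 2 * t * Complex.normSq β = q.re + 1 by simp only [t]; field_simp] at h
  linarith

lemma domain_le_of_le_of_numRange_subset {T' : H →ₗ.[ℂ] H} (hle : T ≤ T')
    (hT' : numRange T' ⊆ {z : ℂ | z.im = 0 ∧ 0 ≤ z.re}) {u : T.domain}
    (hu : ⟪(u : H), T u⟫_ℂ = 0) : T'.domain ≤ (ℂ ∙ T u)ᗮ := by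
  intro v hv
  set u' : T'.domain := ⟨u, hle.1 u.2⟩
  have hTu : T' u' = T u := (hle.2 rfl).symm
  have h := inner_apply_eq_zero_of_inner_apply_self_eq_zero
    (inner_apply_self_nonneg_of_numRange_subset hT') (u := u') (by rwa [hTu]) ⟨v, hv⟩
  rwa [hTu, ← Submodule.mem_orthogonal_singleton_iff_inner_left] at h

end Positive

namespace NilpotentShift

local notation "ℂ²" => EuclideanSpace ℂ (Fin 2)

variable {T : ℂ² →ₗ.[ℂ] ℂ²} (hdom : (T.domain : Set ℂ²) = {ξ | ξ 1 = 0})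
  (hact : ∀ ξ : T.domain, T ξ = ![(0 : ℂ), (ξ : ℂ²) 0])

include hdom in
lemma mem_domain_iff {ξ : ℂ²} : ξ ∈ T.domain ↔ ξ 1 = 0 := Set.ext_iff.1 hdom ξ

include hdom in
lemma single_zero_mem_domain : EuclideanSpace.single 0 1 ∈ T.domain := by
  simp [mem_domain_iff hdom]

include hact in
lemma apply_eq_single (ξ : T.domain) : T ξ = EuclideanSpace.single 1 ((ξ : ℂ²) 0) := by
  ext i
  fin_cases i <;> simp [hact]

include hdom hact in
lemma inner_apply_self_eq_zero (ξ : T.domain) : ⟪(ξ : ℂ²), T ξ⟫_ℂ = 0 := by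
  simp [apply_eq_single hact, EuclideanSpace.inner_single_right, (mem_domain_iff hdom).1 ξ.2]

include hdom hact in
lemma numRange_eq : numRange T = {0} := by
  refine Set.eq_singleton_iff_unique_mem.2 ⟨?_, ?_⟩
  · exact ⟨⟨_, single_zero_mem_domain hdom⟩, by simp, inner_apply_self_eq_zero hdom hact _⟩
  · rintro _ ⟨ξ, -, rfl⟩
    exact inner_apply_self_eq_zero hdom hact ξ

include hdom in
lemma not_dense_domain : ¬ Dense (T.domain : Set ℂ²) := by
  intro hd
  have h := hd.closure_eq ▸ T.domain.closed_of_finiteDimensional.closure_eq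
  have : EuclideanSpace.single 1 1 ∈ (T.domain : Set ℂ²) := h ▸ Set.mem_univ _
  simp [hdom] at this

include hdom hact in
lemma single_zero_not_mem_range_sub_smul (l : ℂ) (ξ : T.domain) :
    T ξ - l • (ξ : ℂ²) ≠ EuclideanSpace.single 0 1 := by
  intro h
  have h1 : (ξ : ℂ²) 0 = 0 := by
    simpa [apply_eq_single hact, (mem_domain_iff hdom).1 ξ.2] using congrArg (· 1) h
  simpa [apply_eq_single hact, h1] using congrArg (· 0) h

include hdom hact in
lemma eq_of_le_of_numRange_subset {T' : ℂ² →ₗ.[ℂ] ℂ²} (hle : T ≤ T')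
    (hT' : numRange T' ⊆ {z : ℂ | z.im = 0 ∧ 0 ≤ z.re}) : T' = T := by
  set u : T.domain := ⟨_, single_zero_mem_domain hdom⟩
  refine (LinearPMap.eq_of_le_of_domain_eq hle (le_antisymm hle.1 fun v hv ↦ ?_)).symm
  have h := domain_le_of_le_of_numRange_subset hle hT' (inner_apply_self_eq_zero hdom hact u) hv
  simpa [Submodule.mem_orthogonal_singleton_iff_inner_left, apply_eq_single hact, u,
    EuclideanSpace.inner_single_right, mem_domain_iff hdom] using h

end NilpotentShift

/-- the operator `T(x, 0) = (0, x)` on `ℂ²` with domain `{(x, 0) : x ∈ ℂ}`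
has numerical range `{0}`, is closed, not densely defined, `R(T - λI) ≠ ℂ²` for every
`λ ∉ [0, ∞)`, and is maximal positive. -/
theorem counterexample_maximal_positive
    (T : EuclideanSpace ℂ (Fin 2) →ₗ.[ℂ] EuclideanSpace ℂ (Fin 2))
    (hdom : (T.domain : Set (EuclideanSpace ℂ (Fin 2))) = {ξ | ξ 1 = 0})
    (hact : ∀ ξ : T.domain, T ξ = ![(0 : ℂ), (ξ : EuclideanSpace ℂ (Fin 2)) 0]) :
    numRange T = {0} ∧
    T.IsClosed ∧
    ¬ Dense (T.domain : Set (EuclideanSpace ℂ (Fin 2))) ∧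
    (∀ l : ℂ, ¬ (l.im = 0 ∧ 0 ≤ l.re) →
      ∃ η : EuclideanSpace ℂ (Fin 2),
        ∀ ξ : T.domain, T ξ - l • (ξ : EuclideanSpace ℂ (Fin 2)) ≠ η) ∧
    (∀ T' : EuclideanSpace ℂ (Fin 2) →ₗ.[ℂ] EuclideanSpace ℂ (Fin 2),
      T ≤ T' → numRange T' ⊆ {z : ℂ | z.im = 0 ∧ 0 ≤ z.re} → T' = T) :=
  ⟨NilpotentShift.numRange_eq hdom hact, T.graph.closed_of_finiteDimensional,
    NilpotentShift.not_dense_domain hdom,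
    fun l _ ↦ ⟨_, NilpotentShift.single_zero_not_mem_range_sub_smul hdom hact l⟩,
    fun _ ↦ NilpotentShift.eq_of_le_of_numRange_subset hdom hact⟩
end

section
/- Let T be a densely defined operator on a complex Hilbert space whose numerical range is contained in a proper convex closed set N ⊆ ℂ, and suppose T is N-maximal. Then T is closed. -/
open scoped InnerProductSpace ComplexInnerProductSpace

open scoped ComplexConjugate
open Filter Topology

/-!
Separating a point outside `N` from `N` puts `numRange T` in a closed half-plane `{z | f z ≤ c}`
with `f ≠ 0`. Rescaled, this is the bound `f ⟪x, y⟫ ≤ c ‖x‖²` on the graph of `T`; being a closed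
condition it passes to the closure of the graph. Applied to `(0, y) + w • (u, T u)` with `w → 0`
in every direction, it forces `⟪u, y⟫ = 0` for all `u` in the dense domain, so `T` is closable.
The numerical range of the closure lies in the closure of `numRange T`, hence in `N`, and
maximality gives `T = T.closure`.
-/

namespace LinearPMap

variable {R E F : Type*} [CommRing R] [TopologicalSpace R] [AddCommGroup E] [AddCommGroup F]
  [Module R E] [Module R F] [TopologicalSpace E] [TopologicalSpace F] [ContinuousAdd E]
  [ContinuousAdd F] [ContinuousSMul R E] [ContinuousSMul R F]

theorem isClosable_of_mk_zero_mem_closure_graph {f : E →ₗ.[R] F}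
    (h : ∀ y : F, ((0 : E), y) ∈ f.graph.topologicalClosure → y = 0) : f.IsClosable :=
  ⟨_, (Submodule.toLinearPMap_graph_eq _ fun p hp hp₁ => h p.2 (by rwa [← hp₁])).symm⟩

end LinearPMap

theorem nonpos_of_forall_pos_le_mul {x K : ℝ} (h : ∀ t : ℝ, 0 < t → x ≤ t * K) : x ≤ 0 := by
  have hlim : Tendsto (fun t : ℝ => t * K) (𝓝[>] 0) (𝓝 0) := by
    simpa using ((continuous_mul_const K).tendsto 0).mono_left nhdsWithin_le_nhds
  exact ge_of_tendsto hlim (eventually_nhdsWithin_of_forall h)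

theorem eq_zero_of_forall_apply_conj_mul_le {f : ℂ →L[ℝ] ℝ} (hf : f ≠ 0) {a : ℂ} {K : ℝ}
    (h : ∀ w : ℂ, f (conj w * a) ≤ ‖w‖ ^ 2 * K) : a = 0 := by
  by_contra ha
  have hray : ∀ s : ℂ, f (s * a) ≤ 0 := fun s =>
    nonpos_of_forall_pos_le_mul (K := ‖s‖ ^ 2 * K) fun t ht => by
      have hts := h (t * conj s)
      have hconj : conj ((t : ℂ) * conj s) * a = t • (s * a) := by
        simp only [map_mul, Complex.conj_ofReal, Complex.conj_conj, Complex.real_smul]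
        ring
      have hnorm : ‖(t : ℂ) * conj s‖ ^ 2 = t ^ 2 * ‖s‖ ^ 2 := by
        simp [mul_pow, abs_of_pos ht]
      rw [hconj, hnorm, map_smul, smul_eq_mul] at hts
      nlinarith
  refine hf (ContinuousLinearMap.ext fun z => ?_)
  have h₁ := hray (z / a)
  have h₂ := hray (-z / a)
  rw [div_mul_cancel₀ _ ha] at h₁ h₂
  rw [map_neg] at h₂
  simp only [zero_apply]
  linarith

section NumericalRange

variable {H : Type*} [NormedAddCommGroup H] [InnerProductSpace ℂ H]

theorem inner_eq_zero_of_forall_mem_apply_inner_le {G : Submodule ℂ (H × H)} {f : ℂ →L[ℝ] ℝ}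
    (hf : f ≠ 0) {c : ℝ} (hG : ∀ p ∈ G, f ⟪p.1, p.2⟫_ℂ ≤ c * ‖p.1‖ ^ 2) {u v y : H}
    (hy : ((0 : H), y) ∈ G) (huv : (u, v) ∈ G) : ⟪u, y⟫_ℂ = 0 := by
  refine eq_zero_of_forall_apply_conj_mul_le hf (K := c * ‖u‖ ^ 2 - f ⟪u, v⟫_ℂ) fun w => ?_
  have hw := hG _ (G.add_mem hy (G.smul_mem w huv))
  have hexp : ⟪w • u, y + w • v⟫_ℂ = conj w * ⟪u, y⟫_ℂ + (‖w‖ ^ 2 : ℝ) • ⟪u, v⟫_ℂ := by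
    rw [inner_add_right, inner_smul_left, inner_smul_left, inner_smul_right, ← mul_assoc,
      Complex.conj_mul', Complex.real_smul]
    push_cast
    ring
  simp only [Prod.smul_mk, Prod.mk_add_mk, zero_add] at hw
  rw [hexp, map_add, map_smul, smul_eq_mul, norm_smul, mul_pow] at hw
  linarith

variable (T : H →ₗ.[ℂ] H)

theorem inv_norm_sq_smul_inner_mem_numRange {ξ : T.domain} (hξ : (ξ : H) ≠ 0) :
    (‖(ξ : H)‖ ^ 2)⁻¹ • ⟪(ξ : H), T ξ⟫_ℂ ∈ numRange T := by
  have hr : ‖(ξ : H)‖ ≠ 0 := norm_ne_zero_iff.mpr hξ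
  refine ⟨((‖(ξ : H)‖⁻¹ : ℝ) : ℂ) • ξ, ?_, ?_⟩
  · simp [norm_smul, hr]
  · rw [T.map_smul, Submodule.coe_smul, inner_smul_left, inner_smul_right, Complex.conj_ofReal,
      ← mul_assoc, Complex.real_smul]
    push_cast
    ring

theorem apply_inner_le_of_numRange_subset {f : ℂ →L[ℝ] ℝ} {c : ℝ}
    (hW : numRange T ⊆ {z | f z ≤ c}) : ∀ p ∈ T.graph, f ⟪p.1, p.2⟫_ℂ ≤ c * ‖p.1‖ ^ 2 := by
  intro p hp
  obtain ⟨ξ, hξ₁, hξ₂⟩ := T.mem_graph_iff.mp hp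
  rw [← hξ₁, ← hξ₂]
  by_cases hξ : (ξ : H) = 0
  · simp [hξ]
  have hnorm : 0 < ‖(ξ : H)‖ ^ 2 := by positivity
  have hmem := hW (inv_norm_sq_smul_inner_mem_numRange T hξ)
  rw [Set.mem_ofPred_eq, map_smul, smul_eq_mul, inv_mul_le_iff₀ hnorm] at hmem
  linarith

theorem isClosable_of_numRange_subset_halfPlane (hdense : Dense (T.domain : Set H))
    {f : ℂ →L[ℝ] ℝ} (hf : f ≠ 0) {c : ℝ} (hW : numRange T ⊆ {z | f z ≤ c}) : T.IsClosable := by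
  have hclosed : IsClosed {p : H × H | f ⟪p.1, p.2⟫_ℂ ≤ c * ‖p.1‖ ^ 2} :=
    isClosed_le (by fun_prop) (by fun_prop)
  have hbound : ∀ p ∈ T.graph.topologicalClosure, f ⟪p.1, p.2⟫_ℂ ≤ c * ‖p.1‖ ^ 2 := by
    intro p hp
    rw [← SetLike.mem_coe, Submodule.topologicalClosure_coe] at hp
    exact closure_minimal (apply_inner_le_of_numRange_subset T hW) hclosed hp
  refine T.isClosable_of_mk_zero_mem_closure_graph fun y hy =>
    hdense.eq_zero_of_inner_right ℂ fun u hu => ?_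
  exact inner_eq_zero_of_forall_mem_apply_inner_le hf hbound hy
    (T.graph.le_topologicalClosure (T.mem_graph ⟨u, hu⟩))

theorem numRange_closure_subset (hT : T.IsClosable) :
    numRange T.closure ⊆ closure (numRange T) := by
  rintro _ ⟨ξ, hξ, rfl⟩
  set p : H × H := ((ξ : H), T.closure ξ)
  have hp : p ∈ closure (T.graph : Set (H × H)) := by
    rw [← Submodule.topologicalClosure_coe, hT.graph_closure_eq_closure_graph]
    exact T.closure.mem_graph ξ
  have := mem_closure_iff_nhdsWithin_neBot.mp hp
  let φ : H × H → ℂ := fun q => (‖q.1‖ ^ 2)⁻¹ • ⟪q.1, q.2⟫_ℂ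
  have hφp : φ p = ⟪(ξ : H), T.closure ξ⟫_ℂ := by
    show (‖(ξ : H)‖ ^ 2)⁻¹ • _ = _
    rw [hξ, one_pow, inv_one, one_smul]
  have hφ : Tendsto φ (𝓝[T.graph] p) (𝓝 (φ p)) := by
    refine (ContinuousAt.tendsto ?_).mono_left nhdsWithin_le_nhds
    exact ((by fun_prop : ContinuousAt (fun q : H × H => ‖q.1‖ ^ 2) p).inv₀
      (by simp [p, hξ])).smul (by fun_prop)
  rw [← hφp]
  refine mem_closure_of_tendsto hφ ?_
  have hne : ∀ᶠ q in 𝓝[T.graph] p, q.1 ≠ 0 :=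
    ((continuous_fst.tendsto p).mono_left nhdsWithin_le_nhds).eventually_ne
      (show (ξ : H) ≠ 0 from norm_ne_zero_iff.mp (hξ ▸ one_ne_zero))
  filter_upwards [hne, self_mem_nhdsWithin] with q hq hqG
  obtain ⟨η, hη₁, hη₂⟩ := T.mem_graph_iff.mp hqG
  simpa only [φ, ← hη₁, ← hη₂] using inv_norm_sq_smul_inner_mem_numRange T (hη₁ ▸ hq)

end NumericalRange

theorem nMaximal_isClosed_general {H : Type*} [NormedAddCommGroup H]
    [InnerProductSpace ℂ H]
    (N : Set ℂ) (hNne : N.Nonempty) (hNcl : IsClosed N) (hNconv : Convex ℝ N)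
    (hNproper : N ≠ Set.univ)
    (T : H →ₗ.[ℂ] H) (hdense : Dense (T.domain : Set H))
    (hW : numRange T ⊆ N)
    (hmax : ∀ T' : H →ₗ.[ℂ] H, T ≤ T' → numRange T' ⊆ N → T' = T) :
    T.IsClosed := by
  obtain ⟨z₀, hz₀⟩ := (Set.ne_univ_iff_exists_notMem N).mp hNproper
  obtain ⟨f, c, hNf, hcf⟩ := geometric_hahn_banach_closed_point hNconv hNcl hz₀
  have hf : f ≠ 0 := by
    rintro rfl
    obtain ⟨n₀, hn₀⟩ := hNne
    simp only [zero_apply] at hNf hcf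
    linarith [hNf n₀ hn₀]
  have hT : T.IsClosable :=
    isClosable_of_numRange_subset_halfPlane T hdense hf fun z hz => (hNf z (hW hz)).le
  have hWcl : numRange T.closure ⊆ N :=
    (numRange_closure_subset T hT).trans (closure_minimal hW hNcl)
  rw [← hmax _ T.le_closure hWcl]
  exact hT.closure_isClosed

/-- a densely defined `N`-maximal operator with numerical range in a closed,
convex, proper subset `N` of `ℂ` is closed. -/
theorem nMaximal_isClosed {H : Type*} [NormedAddCommGroup H]
    [InnerProductSpace ℂ H] [CompleteSpace H]
    (N : Set ℂ) (hNne : N.Nonempty) (hNcl : IsClosed N) (hNconv : Convex ℝ N)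
    (hNproper : N ≠ Set.univ)
    (T : H →ₗ.[ℂ] H) (hdense : Dense (T.domain : Set H))
    (hW : numRange T ⊆ N)
    (hmax : ∀ T' : H →ₗ.[ℂ] H, T ≤ T' → numRange T' ⊆ N → T' = T) :
    T.IsClosed :=
  nMaximal_isClosed_general N hNne hNcl hNconv hNproper T hdense hW hmax
end
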